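/- arXiv:1810.04746 — 6 statements merged into one kernel-verified Lean document; each statement's English description precedes it below -/
import Mathlib

section
/- For all integers r ≥ 2 and s ≥ 3, there exists a constant C such that for all m ≥ 1, |k_s(CT_r(m)) − c_{r,s}·m^{s/2}| ≤ C·m^{(s−1)/2}. -/
open SimpleGraph

universe u v

/-- `G` contains a copy of `F` as a (not necessarily induced) subgraph. -/
def ContainsCopy {α : Type u} {β : Type v} (F : SimpleGraph α) (G : SimpleGraph β) : Prop :=
  ∃ f : α → β, Function.Injective f ∧ ∀ ⦃a b⦄, F.Adj a b → G.Adj (f a) (f b)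

/-- The number of `s`-cliques of `G`. -/
noncomputable def cliqueCount {V : Type u} (G : SimpleGraph V) (s : ℕ) : ℕ :=
  Set.ncard {S : Finset V | G.IsNClique s S}

/-- `G` has exactly `m` edges. -/
def HasEdgeCount {V : Type u} (G : SimpleGraph V) (m : ℕ) : Prop :=
  G.edgeSet.Finite ∧ G.edgeSet.ncard = m

/-- `mex_{K_s}(m, F)`: the maximum number of `s`-cliques in an `F`-free graph with `m` edges
(no restriction on the number of vertices). -/
noncomputable def mexCliques {α : Type u} (s m : ℕ) (F : SimpleGraph α) : ℕ :=
  sSup {k : ℕ | ∃ G : SimpleGraph ℕ, ¬ ContainsCopy F G ∧ HasEdgeCount G m ∧ cliqueCount G s = k}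

/-- The `t`-fold blowup of `K_r`: the complete `r`-partite graph with all parts of size `t`. -/
def blowup (r t : ℕ) : SimpleGraph (Fin r × Fin t) where
  Adj p q := p.1 ≠ q.1
  symm := ⟨fun _ _ h => h.symm⟩
  loopless := ⟨fun _ h => h rfl⟩

/-- Any two distinct elements of `A` are incongruent mod `r`. -/
def IsRainbow (r : ℕ) (A : Finset ℕ) : Prop :=
  ∀ i ∈ A, ∀ j ∈ A, i ≠ j → i % r ≠ j % r

/-- The set consisting of the first `N` `k`-element sets in the `r`-partite colex order. -/
def rpartiteColexInitial (r k N : ℕ) : Set (Finset ℕ) :=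
  {A | A.card = k ∧ IsRainbow r A ∧
    Set.ncard {B | B.card = k ∧ IsRainbow r B ∧
      toColex B ≤ toColex A} ≤ N}

/-- The colex Turán graph `CT_r(m)`: the graph on `ℕ` whose edges are the first `m`
two-element sets in the `r`-partite colex order. -/
def colexTuran (r m : ℕ) : SimpleGraph ℕ where
  Adj a b := a ≠ b ∧ ({a, b} : Finset ℕ) ∈ rpartiteColexInitial r 2 m
  symm := by
    constructor
    intro a b h
    refine ⟨h.1.symm, ?_⟩
    rw [Finset.pair_comm]
    exact h.2
  loopless := ⟨fun a h => h.1 rfl⟩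

/-- `t_r(n)`: the number of edges of the Turán graph `T_r(n)`. -/
noncomputable def turanEdges (r n : ℕ) : ℕ := (turanGraph n r).edgeSet.ncard

/-- `β_r = (2(r-1)/r)^{1/2}`. -/
noncomputable def betaR (r : ℕ) : ℝ := Real.sqrt (2 * ((r : ℝ) - 1) / r)

/-- `c_{r,s} = C(r,s) / C(r,2)^{s/2}`. -/
noncomputable def cRS (r s : ℕ) : ℝ := (r.choose s : ℝ) / ((r.choose 2 : ℝ) ^ ((s : ℝ) / 2))

/-- `ex_{K_t}(n, F)`: the maximum number of `t`-cliques in an `F`-free graph on `n` vertices. -/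
noncomputable def exCliques {α : Type u} (t n : ℕ) (F : SimpleGraph α) : ℕ :=
  sSup {k : ℕ | ∃ G : SimpleGraph (Fin n), ¬ ContainsCopy F G ∧ cliqueCount G t = k}

/-- `ex(n, F)`: the maximum number of edges in an `F`-free graph on `n` vertices. -/
noncomputable def exEdges {α : Type u} (n : ℕ) (F : SimpleGraph α) : ℕ :=
  sSup {k : ℕ | ∃ G : SimpleGraph (Fin n), ¬ ContainsCopy F G ∧ G.edgeSet.ncard = k}

/-- The shadow of the family `F` at level `p`. -/
def shadowP (p : ℕ) (F : Set (Finset ℕ)) : Set (Finset ℕ) :=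
  {B | B.card = p ∧ ∃ A ∈ F, B ⊆ A}

/-! If `C(r,2) q² ≤ m < C(r,2) (q+1)²`, then `CT_r(m)` contains the Turán graph `T_r(rq)` on
`{0, …, rq - 1}` (parts: residue classes mod `r`) and is contained in `T_r(r(q+1))`: a rainbow pair
inside `{0, …, n - 1}` is colex-below every rainbow pair leaving it. The `s`-cliques of `T_r(rq)` are
the rainbow `s`-sets, `C(r,s) q^s` of them, so `k_s(CT_r(m))` lies between `C(r,s) q^s` and
`C(r,s) (q+1)^s`, while `√(m / C(r,2))` lies between `q` and `q + 1`. The two differ by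
`O(q^(s-1)) = O(m^((s-1)/2))`. -/

open Finset

theorem card_transversals_eq_prod_card_fiber {α β : Type*} [DecidableEq α] [DecidableEq β]
    (g : α → β) (X : Finset α) (T : Finset β) :
    #{A ∈ X.powerset | A.image g = T ∧ #A = #T} = ∏ i ∈ T, #{x ∈ X | g x = i} := by
  have card_image_section (f : ∀ i ∈ T, α) (hf : ∀ i hi, g (f i hi) = i) :
      #(T.attach.image fun i => f i.1 i.2) = #T := by
    rw [card_image_of_injOn, card_attach]
    exact fun i _ j _ hij => Subtype.ext <| by simpa only [hf] using congrArg g hij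
  rw [← card_pi]
  symm
  refine card_bij (fun f _ => T.attach.image fun i => f i.1 i.2) ?_ ?_ ?_
  · intro f hf
    simp only [mem_pi, mem_filter] at hf
    simp only [mem_filter, mem_powerset, card_image_section f fun i hi => (hf i hi).2, and_true]
    refine ⟨fun x hx => ?_, ?_⟩
    · obtain ⟨i, -, rfl⟩ := mem_image.1 hx
      exact (hf _ i.2).1
    · ext i
      simp [(hf _ _).2]
  · intro f hf f' hf' h
    simp only [mem_pi, mem_filter] at hf hf'
    funext i hi
    obtain ⟨j, -, hj⟩ := mem_image.1 (h ▸ mem_image_of_mem _ (mem_attach T ⟨i, hi⟩))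
    obtain rfl : j = ⟨i, hi⟩ :=
      Subtype.ext <| by simpa only [(hf' _ j.2).2, (hf _ hi).2] using congrArg g hj
    exact hj.symm
  · intro A hA
    simp only [mem_filter, mem_powerset] at hA
    obtain ⟨hAX, hAT, hcard⟩ := hA
    choose f hfA hfg using fun i (hi : i ∈ T) => mem_image.1 (hAT ▸ hi)
    refine ⟨f, mem_pi.2 fun i hi => mem_filter.2 ⟨hAX (hfA i hi), hfg i hi⟩,
      eq_of_subset_of_card_le (fun x hx => ?_) ?_⟩
    · obtain ⟨i, -, rfl⟩ := mem_image.1 hx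
      exact hfA _ i.2
    · rw [hcard, card_image_section f hfg]

lemma cliqueCount_mono {V : Type*} {G H : SimpleGraph V} {s : ℕ} (hGH : G ≤ H)
    (hH : {S : Finset V | H.IsNClique s S}.Finite) : cliqueCount G s ≤ cliqueCount H s :=
  Set.ncard_le_ncard (fun _ => IsNClique.mono hGH) hH

lemma Nat.exists_mul_sq_le_lt_mul_succ_sq {b : ℕ} (hb : 0 < b) (m : ℕ) :
    ∃ q, b * q ^ 2 ≤ m ∧ m < b * (q + 1) ^ 2 := by
  refine ⟨Nat.sqrt (m / b), ?_, ?_⟩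
  · exact (Nat.mul_le_mul_left b (Nat.sqrt_le' _)).trans (Nat.mul_div_le m b)
  · exact (Nat.lt_mul_div_succ m hb).trans_le
      (Nat.mul_le_mul_left b (Nat.succ_le_of_lt (Nat.lt_succ_sqrt' _)))

lemma abs_sub_mul_pow_le {a q x K : ℝ} (s : ℕ) (ha : 0 ≤ a) (hq : 0 ≤ q)
    (hK : K ∈ Set.Icc (a * q ^ s) (a * (q + 1) ^ s)) (hx : x ∈ Set.Icc q (q + 1)) :
    |K - a * x ^ s| ≤ a * s * (q + 1) ^ (s - 1) := by
  have hxs : a * x ^ s ∈ Set.Icc (a * q ^ s) (a * (q + 1) ^ s) :=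
    ⟨by gcongr; exact hx.1, by gcongr; exacts [hq.trans hx.1, hx.2]⟩
  calc |K - a * x ^ s| ≤ a * ((q + 1) ^ s - q ^ s) := by
        rw [mul_sub]; exact abs_sub_le_of_le_of_le hK.1 hK.2 hxs.1 hxs.2
    _ ≤ a * (|q + 1 - q| * s * max |q + 1| |q| ^ (s - 1)) := by
        gcongr; exact (le_abs_self _).trans (abs_pow_sub_pow_le _ _ _)
    _ = a * s * (q + 1) ^ (s - 1) := by
        rw [add_sub_cancel_left, abs_one, abs_of_nonneg (by linarith), abs_of_nonneg hq,
          max_eq_left (by linarith)]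
        ring

lemma abs_sub_div_rpow_mul_rpow_le {a b q m K : ℝ} {s : ℕ} (hs : 1 ≤ s) (ha : 0 ≤ a)
    (hb : 1 ≤ b) (hq : 0 ≤ q) (hm : 1 ≤ m) (hK : K ∈ Set.Icc (a * q ^ s) (a * (q + 1) ^ s))
    (hmq : m ∈ Set.Icc (b * q ^ 2) (b * (q + 1) ^ 2)) :
    |K - a / b ^ ((s : ℝ) / 2) * m ^ ((s : ℝ) / 2)|
      ≤ a * s * 2 ^ (s - 1) * m ^ (((s : ℝ) - 1) / 2) := by
  set x := √(m / b)
  have hx : x ∈ Set.Icc q (q + 1) := by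
    constructor
    · refine Real.le_sqrt_of_sq_le ?_
      rw [le_div_iff₀ (by linarith)]; linarith [hmq.1]
    · refine Real.sqrt_le_iff.2 ⟨by linarith, ?_⟩
      rw [div_le_iff₀ (by linarith)]; linarith [hmq.2]
  have hxm : x ≤ √m := Real.sqrt_le_sqrt (div_le_self (by linarith) hb)
  have hsm : 1 ≤ √m := Real.one_le_sqrt.2 hm
  have hmain : a / b ^ ((s : ℝ) / 2) * m ^ ((s : ℝ) / 2) = a * x ^ s := by
    rw [mul_comm_div, ← Real.div_rpow (by linarith) (by linarith),
      Real.rpow_div_two_eq_sqrt _ (by positivity), Real.rpow_natCast]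
  have herr : m ^ (((s : ℝ) - 1) / 2) = √m ^ (s - 1) := by
    rw [Real.rpow_div_two_eq_sqrt _ (by linarith), ← Nat.cast_one, ← Nat.cast_sub hs,
      Real.rpow_natCast]
  rw [hmain, herr]
  calc |K - a * x ^ s| ≤ a * s * (q + 1) ^ (s - 1) := abs_sub_mul_pow_le s ha hq hK hx
    _ ≤ a * s * (2 * √m) ^ (s - 1) := by gcongr; linarith [hx.1]
    _ = a * s * 2 ^ (s - 1) * √m ^ (s - 1) := by ring

instance (r : ℕ) : DecidablePred (IsRainbow r) := fun A => by unfold IsRainbow; infer_instance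

def rainbowSets (r t k : ℕ) : Finset (Finset ℕ) :=
  {A ∈ (range t).powersetCard k | IsRainbow r A}

section Rainbow
variable {r t k : ℕ} {A : Finset ℕ}

lemma mem_rainbowSets : A ∈ rainbowSets r t k ↔ A ⊆ range t ∧ #A = k ∧ IsRainbow r A := by
  simp only [rainbowSets, mem_filter, mem_powersetCard, and_assoc]

lemma isRainbow_iff_card_image : IsRainbow r A ↔ #(A.image (· % r)) = #A := by
  rw [card_image_iff]
  exact ⟨fun h i hi j hj hij => by_contra fun hne => h i hi j hj hne hij,
    fun h i hi j hj hne hij => hne (h hi hj hij)⟩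

lemma card_filter_range_mul_mod_eq {q i : ℕ} (hi : i < r) :
    #{x ∈ range (r * q) | x % r = i} = q := by
  have hr : 0 < r := i.zero_le.trans_lt hi
  simpa only [Nat.count_eq_card_filter_range, Nat.ModEq, Nat.mod_eq_of_lt hi, Nat.mul_mod_right,
    Nat.not_lt_zero, if_false, add_zero, Nat.mul_div_cancel_left _ hr]
    using Nat.count_modEq_card (r * q) hr i

theorem card_rainbowSets_mul (q : ℕ) : #(rainbowSets r (r * q) k) = r.choose k * q ^ k := by
  have hmaps : Set.MapsTo (fun A : Finset ℕ => A.image (· % r)) ↑(rainbowSets r (r * q) k)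
      ↑((range r).powersetCard k) := by
    intro A hA
    obtain ⟨hAt, hAk, hA⟩ := mem_rainbowSets.1 hA
    refine mem_powersetCard.2 ⟨fun i hi => ?_, (isRainbow_iff_card_image.1 hA).trans hAk⟩
    obtain ⟨x, hx, rfl⟩ := mem_image.1 hi
    have hx := mem_range.1 (hAt hx)
    exact mem_range.2 (Nat.mod_lt _ (Nat.pos_of_mul_pos_right (x.zero_le.trans_lt hx)))
  rw [card_eq_sum_card_fiberwise hmaps, ← card_range r, ← card_powersetCard, card_range]
  refine sum_const_nat fun T hT => ?_
  obtain ⟨hTr, hTk⟩ := mem_powersetCard.1 hT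
  have hfiber : {A ∈ rainbowSets r (r * q) k | A.image (· % r) = T} =
      {A ∈ (range (r * q)).powerset | A.image (· % r) = T ∧ #A = #T} := by
    ext A
    simp only [mem_filter, mem_rainbowSets, mem_powerset, isRainbow_iff_card_image]
    constructor
    · rintro ⟨⟨hAt, hAk, hA⟩, rfl⟩
      exact ⟨hAt, rfl, hA.symm⟩
    · rintro ⟨hAt, rfl, hA⟩
      exact ⟨⟨hAt, hA.trans hTk, hA.symm⟩, rfl⟩
  rw [hfiber, card_transversals_eq_prod_card_fiber, ← hTk, ← prod_const]
  exact prod_congr rfl fun i hi => card_filter_range_mul_mod_eq (mem_range.1 (hTr hi))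

end Rainbow

def rangeTuranGraph (r t : ℕ) : SimpleGraph ℕ where
  Adj a b := a < t ∧ b < t ∧ a % r ≠ b % r
  symm := ⟨fun _ _ ⟨ha, hb, hab⟩ => ⟨hb, ha, hab.symm⟩⟩
  loopless := ⟨fun _ h => h.2.2 rfl⟩

section RangeTuranGraph
variable {r t s : ℕ}

lemma rangeTuranGraph_adj {a b : ℕ} :
    (rangeTuranGraph r t).Adj a b ↔ a < t ∧ b < t ∧ a % r ≠ b % r := Iff.rfl

lemma isNClique_rangeTuranGraph_iff (hs : 2 ≤ s) {S : Finset ℕ} :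
    (rangeTuranGraph r t).IsNClique s S ↔ S ∈ rainbowSets r t s := by
  simp only [mem_rainbowSets, isNClique_iff, IsClique, Set.Pairwise, rangeTuranGraph_adj, mem_coe]
  constructor
  · rintro ⟨hS, rfl⟩
    refine ⟨fun x hx => ?_, rfl, fun x hx y hy hxy => (hS hx hy hxy).2.2⟩
    obtain ⟨y, hy, hyx⟩ := exists_mem_ne (by omega : 1 < #S) x
    exact mem_range.2 (hS hx hy hyx.symm).1
  · rintro ⟨hSt, rfl, hS⟩
    exact ⟨fun x hx y hy hxy =>
      ⟨mem_range.1 (hSt hx), mem_range.1 (hSt hy), hS x hx y hy hxy⟩, rfl⟩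

lemma setOf_isNClique_rangeTuranGraph (hs : 2 ≤ s) :
    {S | (rangeTuranGraph r t).IsNClique s S} = ↑(rainbowSets r t s) :=
  Set.ext fun _ => isNClique_rangeTuranGraph_iff hs

lemma cliqueCount_rangeTuranGraph (hs : 2 ≤ s) :
    cliqueCount (rangeTuranGraph r t) s = #(rainbowSets r t s) := by
  rw [cliqueCount, setOf_isNClique_rangeTuranGraph hs, Set.ncard_coe_finset]

end RangeTuranGraph

section ColexTuran
variable {r k N t : ℕ} {A : Finset ℕ}

lemma isRainbow_pair_iff {a b : ℕ} (hab : a ≠ b) : IsRainbow r {a, b} ↔ a % r ≠ b % r := by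
  refine ⟨fun h => h a (mem_insert_self a _) b (mem_insert_of_mem (mem_singleton_self b)) hab,
    fun h i hi j hj hij => ?_⟩
  simp only [mem_insert, mem_singleton] at hi hj
  rcases hi with rfl | rfl <;> rcases hj with rfl | rfl
  exacts [(hij rfl).elim, h, h.symm, (hij rfl).elim]

lemma subset_range_of_toColex_le {B : Finset ℕ} (hBA : toColex B ≤ toColex A)
    (hA : A ⊆ range t) : B ⊆ range t :=
  fun x hx => mem_range.2 (Colex.forall_lt_mono hBA (fun _ hb => mem_range.1 (hA hb)) x hx)

lemma setOf_toColex_le_subset_rainbowSets (hA : A ⊆ range t) :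
    {B | #B = k ∧ IsRainbow r B ∧ toColex B ≤ toColex A} ⊆ ↑(rainbowSets r t k) :=
  fun _ ⟨hBk, hB, hBA⟩ => mem_rainbowSets.2 ⟨subset_range_of_toColex_le hBA hA, hBk, hB⟩

lemma rainbowSets_subset_setOf_toColex_le (hA : ¬ A ⊆ range t) :
    ↑(rainbowSets r t k) ⊆ {B | #B = k ∧ IsRainbow r B ∧ toColex B ≤ toColex A} := by
  intro B hB
  obtain ⟨hBt, hBk, hB⟩ := mem_rainbowSets.1 hB
  exact ⟨hBk, hB, le_of_not_ge fun hAB => hA (subset_range_of_toColex_le hAB hBt)⟩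

lemma mem_rpartiteColexInitial_of_mem_rainbowSets (hA : A ∈ rainbowSets r t k)
    (hN : #(rainbowSets r t k) ≤ N) : A ∈ rpartiteColexInitial r k N := by
  obtain ⟨hAt, hAk, hA⟩ := mem_rainbowSets.1 hA
  refine ⟨hAk, hA, le_trans ?_ hN⟩
  rw [← Set.ncard_coe_finset]
  exact Set.ncard_le_ncard (setOf_toColex_le_subset_rainbowSets hAt) (finite_toSet _)

lemma subset_range_of_mem_rpartiteColexInitial (hA : A ∈ rpartiteColexInitial r k N)
    (hN : N < #(rainbowSets r t k)) : A ⊆ range t := by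
  by_contra hAt
  obtain ⟨t', hAt'⟩ := A.exists_nat_subset_range
  have hle := Set.ncard_le_ncard (rainbowSets_subset_setOf_toColex_le (r := r) (k := k) hAt)
    ((finite_toSet _).subset (setOf_toColex_le_subset_rainbowSets hAt'))
  rw [Set.ncard_coe_finset] at hle
  exact (hN.trans_le hle).not_ge hA.2.2

lemma rangeTuranGraph_le_colexTuran {m : ℕ} (hm : #(rainbowSets r t 2) ≤ m) :
    rangeTuranGraph r t ≤ colexTuran r m := by
  rintro a b ⟨ha, hb, hab⟩
  have hne : a ≠ b := by rintro rfl; exact hab rfl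
  have hsub : {a, b} ⊆ range t := by
    simp only [insert_subset_iff, singleton_subset_iff, mem_range]
    exact ⟨ha, hb⟩
  exact ⟨hne, mem_rpartiteColexInitial_of_mem_rainbowSets
    (mem_rainbowSets.2 ⟨hsub, card_pair hne, (isRainbow_pair_iff hne).2 hab⟩) hm⟩

lemma colexTuran_le_rangeTuranGraph {m : ℕ} (hm : m < #(rainbowSets r t 2)) :
    colexTuran r m ≤ rangeTuranGraph r t := by
  rintro a b ⟨hne, hab⟩
  have hsub := subset_range_of_mem_rpartiteColexInitial hab hm
  simp only [insert_subset_iff, singleton_subset_iff, mem_range] at hsub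
  exact ⟨hsub.1, hsub.2, (isRainbow_pair_iff hne).1 hab.2.1⟩

theorem cliqueCount_colexTuran_mem_Icc {s m t' : ℕ} (hs : 2 ≤ s)
    (hmt : #(rainbowSets r t 2) ≤ m) (hmt' : m < #(rainbowSets r t' 2)) :
    cliqueCount (colexTuran r m) s ∈ Set.Icc #(rainbowSets r t s) #(rainbowSets r t' s) := by
  have hle := colexTuran_le_rangeTuranGraph hmt'
  have hfin : {S | (rangeTuranGraph r t').IsNClique s S}.Finite := by
    rw [setOf_isNClique_rangeTuranGraph hs]
    exact finite_toSet _
  rw [← cliqueCount_rangeTuranGraph hs, ← cliqueCount_rangeTuranGraph hs]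
  exact ⟨cliqueCount_mono (rangeTuranGraph_le_colexTuran hmt)
      (hfin.subset fun _ hS => hS.mono hle),
    cliqueCount_mono hle hfin⟩

end ColexTuran

/-- **Proposition 2.1, asymptotic part**: `k_s(CT_r(m)) = c_{r,s} m^{s/2} + O(m^{(s-1)/2})`. -/
theorem colexTuran_cliques_asymptotic (r s : ℕ) (hr : 2 ≤ r) (hs : 3 ≤ s) :
    ∃ C : ℝ, ∀ m : ℕ, 1 ≤ m →
      |(cliqueCount (colexTuran r m) s : ℝ) - cRS r s * (m : ℝ) ^ ((s : ℝ) / 2)|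
        ≤ C * (m : ℝ) ^ (((s : ℝ) - 1) / 2) := by
  refine ⟨r.choose s * s * 2 ^ (s - 1), fun m hm => ?_⟩
  have hb : 0 < r.choose 2 := Nat.choose_pos hr
  obtain ⟨q, hqm, hmq⟩ := Nat.exists_mul_sq_le_lt_mul_succ_sq hb m
  have hK := cliqueCount_colexTuran_mem_Icc (s := s) (t := r * q) (t' := r * (q + 1)) (by omega)
    ((card_rainbowSets_mul q).trans_le hqm) (hmq.trans_eq (card_rainbowSets_mul _).symm)
  rw [card_rainbowSets_mul, card_rainbowSets_mul] at hK
  rw [cRS]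
  exact abs_sub_div_rpow_mul_rpow_le (by omega) (Nat.cast_nonneg _) (by exact_mod_cast hb)
    (Nat.cast_nonneg q) (by exact_mod_cast hm) ⟨by exact_mod_cast hK.1, by exact_mod_cast hK.2⟩
    ⟨by exact_mod_cast hqm, by exact_mod_cast hmq.le⟩
end

section
/- Let s ≥ 3 be an integer. For every ε > 0 there exists m₀ such that every graph G with exactly m ≥ m₀ edges satisfies k_s(G) ≤ (1 + ε)·(2^{s/2}/s!)·m^{s/2}. -/
open SimpleGraph

universe u v

/-! The `s`-cliques of a graph with `m` edges form an `s`-uniform family whose `(s - 2)`-fold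
shadow consists of edges. Since `m < C(k, 2)` for `k = ⌊√(2m)⌋ + 2`, Lovász's form of the
Kruskal–Katona theorem allows at most `C(k, s) ≤ k ^ s / s!` cliques, and `k = (1 + o(1)) √(2m)`.
Cliques of size at least two live on the finite set of non-isolated vertices, so we may assume
that the vertex type is some `Fin n`. -/

open Finset Filter Topology
open scoped FinsetFamily

theorem Finset.card_le_choose_of_card_shadow_iterate_lt {n r i k : ℕ}
    {𝒜 : Finset (Finset (Fin n))} (h𝒜 : (𝒜 : Set (Finset (Fin n))).Sized r) (hir : i ≤ r)
    (h : #(∂^[i] 𝒜) < k.choose (r - i)) : #𝒜 ≤ k.choose r := by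
  by_contra! hlt
  rcases le_or_gt r k with hrk | hkr
  · rcases le_or_gt k n with hkn | hnk
    · exact h.not_ge (kruskal_katona_lovasz_form hir hrk hkn h𝒜 hlt.le)
    · have hcard : #𝒜 ≤ n.choose r := by simpa using h𝒜.card_le
      exact (hcard.trans (Nat.choose_le_choose r hnk.le)).not_gt hlt
  · -- A nonempty `𝒜` has `#(∂^[i] 𝒜) ≥ r.choose (r - i) ≥ k.choose (r - i)`.
    obtain ⟨A, hA⟩ := card_pos.1 (pos_of_gt hlt)
    have hrn : r ≤ n := by simpa [h𝒜 hA] using card_le_univ A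
    have hshadow := kruskal_katona_lovasz_form hir le_rfl hrn h𝒜 (by simpa using pos_of_gt hlt)
    exact h.not_ge ((Nat.choose_le_choose _ hkr.le).trans hshadow)

namespace SimpleGraph

section Finite

variable {α : Type*} [Fintype α] [DecidableEq α] (G : SimpleGraph α) [DecidableRel G.Adj]

theorem shadow_iterate_cliqueFinset_subset (r i : ℕ) :
    ∂^[i] (G.cliqueFinset (r + i)) ⊆ G.cliqueFinset r := by
  intro B hB
  obtain ⟨A, hA, hBA, hcard⟩ := mem_shadow_iterate_iff_exists_sdiff.1 hB
  rw [mem_cliqueFinset_iff] at hA ⊢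
  refine ⟨hA.1.subset (by exact_mod_cast hBA), ?_⟩
  have := card_sdiff_add_card_eq_card hBA
  have := hA.2
  omega

theorem card_cliqueFinset_two_le : #(G.cliqueFinset 2) ≤ #G.edgeFinset := by
  refine (card_le_card fun B hB => ?_).trans (card_image_le (f := Sym2.toFinset))
  obtain ⟨a, b, hab, rfl⟩ := card_eq_two.1 (mem_cliqueFinset_iff.1 hB).2
  have hadj : G.Adj a b := (mem_cliqueFinset_iff.1 hB).1 (by simp) (by simp) hab
  exact mem_image.2 ⟨s(a, b), mem_edgeFinset.2 hadj, Sym2.toFinset_mk_eq⟩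

end Finite

theorem card_cliqueFinset_le_choose_of_card_edgeFinset_lt {n r k : ℕ} (G : SimpleGraph (Fin n))
    [DecidableRel G.Adj] (hr : 2 ≤ r) (h : #G.edgeFinset < k.choose 2) :
    #(G.cliqueFinset r) ≤ k.choose r := by
  obtain ⟨i, rfl⟩ : ∃ i, r = 2 + i := ⟨r - 2, by omega⟩
  refine card_le_choose_of_card_shadow_iterate_lt (i := i)
    (fun A hA => (mem_cliqueFinset_iff.1 hA).2) (by omega) ?_
  rw [show 2 + i - i = 2 by omega]
  exact ((card_le_card (G.shadow_iterate_cliqueFinset_subset 2 i)).trans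
    G.card_cliqueFinset_two_le).trans_lt h

variable {α β : Type*}

theorem finite_support_of_finite_edgeSet {G : SimpleGraph α} (h : G.edgeSet.Finite) :
    G.support.Finite := by
  classical
  refine (h.biUnion fun e _ => e.toFinset.finite_toSet).subset ?_
  rintro v ⟨w, hvw⟩
  exact Set.mem_biUnion (G.mem_edgeSet.2 hvw) (by simp [Sym2.toFinset_mk_eq])

theorem cliqueCount_map (G : SimpleGraph α) (f : α ↪ β) {r : ℕ} (hr : r ≠ 1) :
    cliqueCount (G.map f) r = cliqueCount G r :=
  (congrArg Set.ncard (cliqueSet_map hr G f)).trans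
    (Set.ncard_image_of_injective _ (Finset.map_injective f))

theorem hasEdgeCount_map_iff (G : SimpleGraph α) (f : α ↪ β) {m : ℕ} :
    HasEdgeCount (G.map f) m ↔ HasEdgeCount G m := by
  rw [HasEdgeCount, HasEdgeCount, edgeSet_map,
    Set.finite_image_iff f.sym2Map.injective.injOn,
    Set.ncard_image_of_injective _ f.sym2Map.injective]

theorem exists_fin_graph_of_hasEdgeCount {G : SimpleGraph α} {m : ℕ} (hG : HasEdgeCount G m) :
    ∃ (n : ℕ) (H : SimpleGraph (Fin n)), HasEdgeCount H m ∧
      ∀ r ≠ 1, cliqueCount H r = cliqueCount G r := by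
  have := (finite_support_of_finite_edgeSet hG.1).to_subtype
  set G' := G.induce G.support
  have hG' : G'.map (Function.Embedding.subtype _) = G := G.spanningCoe_induce_support
  refine ⟨_, G'.map (Finite.equivFin G.support).toEmbedding, ?_, fun r hr => ?_⟩
  · rwa [hasEdgeCount_map_iff, ← hasEdgeCount_map_iff G' (.subtype _), hG']
  · rw [cliqueCount_map _ _ hr, ← cliqueCount_map G' (.subtype _) hr, hG']

theorem cliqueCount_le_choose_of_lt_choose_two {G : SimpleGraph α} {m r k : ℕ}
    (hG : HasEdgeCount G m) (hm : m < k.choose 2) (hr : 2 ≤ r) :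
    cliqueCount G r ≤ k.choose r := by
  classical
  obtain ⟨n, H, hH, hcount⟩ := exists_fin_graph_of_hasEdgeCount hG
  have hedges : #H.edgeFinset = m := by
    rw [← hH.2, ← coe_edgeFinset, Set.ncard_coe_finset]
  rw [← hcount r (by omega), cliqueCount, ← cliqueSet, ← coe_cliqueFinset, Set.ncard_coe_finset]
  exact H.card_cliqueFinset_le_choose_of_card_edgeFinset_lt hr (hedges ▸ hm)

end SimpleGraph

theorem Nat.lt_choose_two_sqrt_add_two (m : ℕ) : m < (Nat.sqrt (2 * m) + 2).choose 2 := by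
  have h := Nat.lt_succ_sqrt (2 * m)
  rw [Nat.choose_two_right, show Nat.sqrt (2 * m) + 2 - 1 = Nat.sqrt (2 * m) + 1 by omega,
    Nat.lt_iff_add_one_le, Nat.le_div_iff_mul_le two_pos]
  nlinarith

theorem eventually_choose_sqrt_add_two_le (s : ℕ) {ε : ℝ} (hε : 0 < ε) :
    ∀ᶠ m : ℕ in atTop, ((Nat.sqrt (2 * m) + 2).choose s : ℝ)
      ≤ (1 + ε) * ((2 : ℝ) ^ ((s : ℝ) / 2) / (s.factorial : ℝ)) * (m : ℝ) ^ ((s : ℝ) / 2) := by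
  have hsqrt : Tendsto (fun m : ℕ => √(2 * m)) atTop atTop :=
    Real.tendsto_sqrt_atTop.comp (tendsto_natCast_atTop_atTop.const_mul_atTop two_pos)
  have hratio : Tendsto (fun m : ℕ => (1 + 2 / √(2 * m)) ^ s) atTop (𝓝 1) := by
    simpa using ((tendsto_const_nhds.div_atTop hsqrt).const_add 1).pow s
  filter_upwards [(tendsto_order.1 hratio).2 (1 + ε) (by linarith), hsqrt.eventually_gt_atTop 0]
    with m hlt hpos
  have hk : ((Nat.sqrt (2 * m) + 2 : ℕ) : ℝ) ≤ (1 + 2 / √(2 * m)) * √(2 * m) := by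
    have : ((Nat.sqrt (2 * m) : ℕ) : ℝ) ≤ √(2 * m) :=
      Real.le_sqrt_of_sq_le (by exact_mod_cast Nat.sqrt_le' (2 * m))
    rw [add_mul, div_mul_cancel₀ _ hpos.ne']
    push_cast
    linarith
  calc ((Nat.sqrt (2 * m) + 2).choose s : ℝ)
      ≤ ((Nat.sqrt (2 * m) + 2 : ℕ) : ℝ) ^ s / s.factorial := Nat.choose_le_pow_div s _
    _ ≤ (1 + 2 / √(2 * m)) ^ s * √(2 * m) ^ s / s.factorial := by
        rw [← mul_pow]
        gcongr
    _ ≤ (1 + ε) * √(2 * m) ^ s / s.factorial := by gcongr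
    _ = (1 + ε) * ((2 : ℝ) ^ ((s : ℝ) / 2) / (s.factorial : ℝ)) * (m : ℝ) ^ ((s : ℝ) / 2) := by
        rw [← Real.rpow_natCast, ← Real.rpow_div_two_eq_sqrt _ (by positivity),
          Real.mul_rpow zero_le_two (Nat.cast_nonneg m)]
        ring

/-- **Corollary 2.4**: for `s ≥ 3`, every graph with `m` edges has at most
`(1 + o(1)) (2^{s/2}/s!) m^{s/2}` copies of `K_s`. -/
theorem cliques_upper_bound (s : ℕ) (hs : 3 ≤ s) (ε : ℝ) (hε : 0 < ε) :
    ∃ m₀ : ℕ, ∀ m : ℕ, m₀ ≤ m → ∀ (V : Type u) (G : SimpleGraph V),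
      HasEdgeCount G m →
      (cliqueCount G s : ℝ)
        ≤ (1 + ε) * ((2 : ℝ) ^ ((s : ℝ) / 2) / (s.factorial : ℝ)) * (m : ℝ) ^ ((s : ℝ) / 2) := by
  obtain ⟨m₀, hm₀⟩ := eventually_atTop.1 (eventually_choose_sqrt_add_two_le s hε)
  refine ⟨m₀, fun m hm V G hG => le_trans ?_ (hm₀ m hm)⟩
  exact_mod_cast SimpleGraph.cliqueCount_le_choose_of_lt_choose_two hG
    (Nat.lt_choose_two_sqrt_add_two m) (by omega)
end

section
/- For all integers r ≥ 2 and t ≥ 1 and every real ε > 0, there exists n₀ such that every graph G on n ≥ n₀ vertices with e(G) ≥ t_r(n) + ε·n² contains a subgraph isomorphic to K_{r+1}[t]. -/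
open SimpleGraph

universe u v

/-!
Repeatedly deleting a vertex of degree less than `a · (current order)`, where
`a = 1 - 1/r + ε`, never decreases `2 e - a (n² + n)`. The deletion therefore stops at a subgraph
of minimum degree at least `a · (its order)`, and since `2 t_r(n) ≥ (1 - 1/r) n² - O(r²)`, that
subgraph still has order about `√ε n`, and the minimum-degree form of the Erdős–Stone theorem
(`eventually_completeEquipartiteGraph_isContained_of_minDegree`) applies to it.
-/

open Finset Filter

namespace SimpleGraph

lemma containsCopy_of_isContained {α : Type u} {β : Type v} {F : SimpleGraph α}
    {G : SimpleGraph β} (h : F ⊑ G) : ContainsCopy F G :=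
  let ⟨f⟩ := h
  ⟨f, f.injective, fun _ _ hab => f.toHom.map_adj hab⟩

lemma blowup_eq_completeEquipartiteGraph (r t : ℕ) :
    blowup r t = completeEquipartiteGraph r t := by
  ext; rfl

lemma sub_one_mul_sq_le_card_edgeFinset_turanGraph (r n : ℕ) :
    (r - 1) * n ^ 2 ≤ 2 * r * #(turanGraph n r).edgeFinset + r ^ 3 + r := by
  rcases r.eq_zero_or_pos with rfl | hr
  · simp
  rw [card_edgeFinset_turanGraph]
  set q := n % r
  set X := (n ^ 2 - q ^ 2) * (r - 1)
  have hq : q < r := Nat.mod_lt n hr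
  have hqn : q ^ 2 ≤ n ^ 2 := Nat.pow_le_pow_left (Nat.mod_le n r) 2
  have hX : (r - 1) * n ^ 2 = X + (r - 1) * q ^ 2 := by
    rw [mul_comm (r - 1) (q ^ 2), ← add_mul, Nat.sub_add_cancel hqn, mul_comm]
  have hdiv : X < 2 * r * (X / (2 * r)) + 2 * r := by
    have := Nat.div_add_mod X (2 * r)
    have := Nat.mod_lt X (show 0 < 2 * r by omega)
    omega
  have hq2 : (r - 1) * q ^ 2 + 2 * r ≤ r ^ 3 + r := by
    obtain ⟨s, rfl⟩ : ∃ s, r = s + 1 := ⟨r - 1, by omega⟩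
    have : q ^ 2 ≤ s ^ 2 := Nat.pow_le_pow_left (by omega) 2
    simp only [Nat.add_sub_cancel]
    nlinarith
  rw [mul_add]
  omega

lemma sub_le_two_mul_turanEdges {r : ℕ} (hr : 0 < r) (n : ℕ) :
    (1 - 1 / r) * (n : ℝ) ^ 2 - (r ^ 2 + 1) ≤ 2 * turanEdges r n := by
  have h := sub_one_mul_sq_le_card_edgeFinset_turanGraph r n
  rw [← Set.ncard_coe_finset, coe_edgeFinset, ← turanEdges] at h
  have h' := (Nat.cast_le (α := ℝ)).2 h
  push_cast [Nat.cast_sub (show 1 ≤ r from hr)] at h'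
  have hr' : (0 : ℝ) < r := by exact_mod_cast hr
  rw [show (1 - 1 / r) * (n : ℝ) ^ 2 - (r ^ 2 + 1) = ((r - 1) * n ^ 2 - r ^ 3 - r) / r by
    field_simp; ring, div_le_iff₀ hr']
  linarith

lemma exists_completeEquipartiteGraph_isContained_of_minDegree {ε : ℝ} (hε : 0 < ε) (r t : ℕ) :
    ∃ N : ℕ, ∀ {W : Type u} [Fintype W] (H : SimpleGraph W) [DecidableRel H.Adj],
      N ≤ Fintype.card W → (1 - 1 / r + ε) * Fintype.card W ≤ H.minDegree →
      completeEquipartiteGraph (r + 1) t ⊑ H := by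
  obtain ⟨N, hN⟩ :=
    eventually_atTop.1 (eventually_completeEquipartiteGraph_isContained_of_minDegree hε r t)
  refine ⟨N, fun H _ hW hδ => ?_⟩
  classical
  have e := H.overFinIso rfl
  refine (hN _ hW (G := H.overFin rfl) ?_).trans ⟨e.symm.toCopy⟩
  exact hδ.trans (by exact_mod_cast Copy.minDegree_mono (f := e.toCopy) e.surjective)

variable {V : Type u} [Fintype V]

lemma two_mul_card_edgeFinset_le_sq (G : SimpleGraph V) [DecidableRel G.Adj] :
    2 * #G.edgeFinset ≤ Fintype.card V ^ 2 := by
  rw [two_mul_card_edgeFinset, sq, ← Fintype.card_prod]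
  exact card_filter_le _ _

variable [DecidableEq V]

lemma card_edgeFinset_induce_compl_singleton_add_degree (G : SimpleGraph V) [DecidableRel G.Adj]
    (x : V) : #(G.induce {x}ᶜ).edgeFinset + G.degree x = #G.edgeFinset := by
  rw [card_edgeFinset_induce_compl_singleton, card_edgeFinset_deleteIncidenceSet,
    Nat.sub_add_cancel (G.degree_le_card_edgeFinset x)]

theorem exists_isContained_le_minDegree (a : ℝ) (G : SimpleGraph V) [DecidableRel G.Adj] :
    ∃ (W : Type u) (_ : Fintype W) (H : SimpleGraph W) (_ : DecidableRel H.Adj),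
      H ⊑ G ∧ a * Fintype.card W ≤ H.minDegree ∧
      2 * #G.edgeFinset - a * (Fintype.card V ^ 2 + Fintype.card V) ≤
        2 * #H.edgeFinset - a * (Fintype.card W ^ 2 + Fintype.card W) := by
  induction hn : Fintype.card V using Nat.strong_induction_on generalizing V with
  | _ n ih =>
  by_cases hδ : a * Fintype.card V ≤ G.minDegree
  · exact ⟨V, _, G, _, .refl _, hδ, by rw [hn]⟩
  have : Nonempty V := by
    by_contra h
    simp [not_nonempty_iff.1 h] at hδ
  obtain ⟨x, hx⟩ := G.exists_minimal_degree_vertex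
  have hcard : Fintype.card ↥({x}ᶜ : Set V) = n - 1 := by
    rw [← hn, Fintype.card_compl_set, Set.card_singleton]
  have hn0 : 0 < n := hn ▸ Fintype.card_pos
  obtain ⟨W, _, H, _, hHG, hδH, hH⟩ := ih (n - 1) (by omega) (G.induce {x}ᶜ) hcard
  refine ⟨W, _, H, _, hHG.trans ⟨Copy.induce G _⟩, hδH, le_trans ?_ hH⟩
  have hdel := card_edgeFinset_induce_compl_singleton_add_degree G x
  have hdeg : (G.degree x : ℝ) < a * n := by rw [← hx, ← hn]; exact not_le.1 hδ
  rw [← hdel, Nat.cast_sub hn0]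
  push_cast
  linarith

theorem exists_isContained_le_minDegree_of_turanEdges_add_le {r : ℕ} (hr : 0 < r) {ε : ℝ}
    (hε : 0 ≤ ε) (G : SimpleGraph V) [DecidableRel G.Adj]
    (hG : turanEdges r (Fintype.card V) + ε * Fintype.card V ^ 2 ≤ #G.edgeFinset) :
    ∃ (W : Type u) (_ : Fintype W) (H : SimpleGraph W) (_ : DecidableRel H.Adj),
      H ⊑ G ∧ (1 - 1 / r + ε) * Fintype.card W ≤ H.minDegree ∧
      ε * Fintype.card V ^ 2 - (1 + ε) * Fintype.card V - (r ^ 2 + 1) ≤ Fintype.card W ^ 2 := by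
  set a : ℝ := 1 - 1 / r + ε
  obtain ⟨W, _, H, _, hHG, hδ, hH⟩ := exists_isContained_le_minDegree a G
  refine ⟨W, _, H, _, hHG, hδ, ?_⟩
  set n := Fintype.card V
  set m := Fintype.card W
  have hT := sub_le_two_mul_turanEdges hr n
  have hHm : (2 * #H.edgeFinset : ℝ) ≤ m ^ 2 := by exact_mod_cast two_mul_card_edgeFinset_le_sq H
  have hr1 : (1 : ℝ) / r ≤ 1 := by
    rw [div_le_one (by positivity)]; exact_mod_cast hr
  have ha : 0 ≤ a := by simp only [a]; linarith
  calc ε * n ^ 2 - (1 + ε) * n - (r ^ 2 + 1)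
      ≤ (1 - 1 / r) * n ^ 2 - (r ^ 2 + 1) + 2 * ε * n ^ 2 - a * (n ^ 2 + n) := by
        simp only [a]; nlinarith [mul_nonneg (by positivity : (0 : ℝ) ≤ 1 / r) (Nat.cast_nonneg n)]
    _ ≤ 2 * #G.edgeFinset - a * (n ^ 2 + n) := by linarith
    _ ≤ 2 * #H.edgeFinset - a * (m ^ 2 + m) := hH
    _ ≤ m ^ 2 := by nlinarith [mul_nonneg ha (by positivity : (0 : ℝ) ≤ m ^ 2 + m)]

end SimpleGraph

theorem erdos_stone_general (r t : ℕ) (hr : 2 ≤ r) (ε : ℝ) (hε : 0 < ε) :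
    ∃ n₀ : ℕ, ∀ n : ℕ, n₀ ≤ n → ∀ (V : Type u) [Fintype V], ∀ G : SimpleGraph V,
      Fintype.card V = n →
      (turanEdges r n : ℝ) + ε * (n : ℝ) ^ 2 ≤ (G.edgeSet.ncard : ℝ) →
      ContainsCopy (blowup (r + 1) t) G := by
  classical
  obtain ⟨N, hN⟩ := exists_completeEquipartiteGraph_isContained_of_minDegree hε r t
  have hC : 0 < (N ^ 2 + r ^ 2 + 2 + ε) / ε := by positivity
  refine ⟨⌈(N ^ 2 + r ^ 2 + 2 + ε) / ε⌉₊, fun n hn V _ G hV hG => ?_⟩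
  subst hV
  rw [← coe_edgeFinset, Set.ncard_coe_finset] at hG
  obtain ⟨W, _, H, _, hHG, hδ, hm⟩ :=
    exists_isContained_le_minDegree_of_turanEdges_add_le (by omega) hε.le G hG
  rw [blowup_eq_completeEquipartiteGraph]
  refine containsCopy_of_isContained ((hN H ?_ hδ).trans hHG)
  have hn1 : (1 : ℝ) ≤ Fintype.card V := by exact_mod_cast (Nat.ceil_pos.2 hC).trans_le hn
  have hn' : N ^ 2 + r ^ 2 + 2 + ε ≤ ε * Fintype.card V := by
    rw [← div_le_iff₀' hε]; exact Nat.ceil_le.1 hn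
  have hNm : (N : ℝ) ^ 2 ≤ Fintype.card W ^ 2 := by
    nlinarith [mul_le_mul_of_nonneg_left hn' (by positivity : (0 : ℝ) ≤ Fintype.card V)]
  exact_mod_cast (pow_le_pow_iff_left₀ (by positivity) (by positivity) two_ne_zero).1 hNm

/-- **Erdős–Stone theorem** (Theorem 1.4): for `r ≥ 2`, `t ≥ 1`, and `ε > 0`, there is `n₀`
such that every graph on `n ≥ n₀` vertices with at least `t_r(n) + ε n²` edges contains
`K_{r+1}[t]`. -/
theorem erdos_stone (r t : ℕ) (hr : 2 ≤ r) (ht : 1 ≤ t) (ε : ℝ) (hε : 0 < ε) :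
    ∃ n₀ : ℕ, ∀ n : ℕ, n₀ ≤ n → ∀ (V : Type u) [Fintype V], ∀ G : SimpleGraph V,
      Fintype.card V = n →
      (turanEdges r n : ℝ) + ε * (n : ℝ) ^ 2 ≤ (G.edgeSet.ncard : ℝ) →
      ContainsCopy (blowup (r + 1) t) G :=
  erdos_stone_general r t hr ε hε
end

section
/- Let F be a graph with at least one edge, and let χ(F) denote its chromatic number. Then ex(n, F) = ((χ(F) − 2)/(χ(F) − 1) + o(1))·C(n,2); that is, for every ε > 0 there exists n₀ such that for all n ≥ n₀, |ex(n, F) − ((χ(F) − 2)/(χ(F) − 1))·C(n,2)| ≤ ε·C(n,2). -/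
/-! Turán's graph `T_r(n)` is `r`-colourable, hence `F`-free when `r < χ(F)`, and each of its
vertices misses at most `⌈n/r⌉` vertices, so it has at least `(1 - 1/r) C(n,2)` edges. Conversely,
a graph with `(1 - 1/r + ε) C(n,2)` edges contains, after repeatedly deleting vertices of degree
below `(1 - 1/r + ε/2)` times the current order, an induced subgraph on `Ω(√ε n)` vertices of
minimum degree `(1 - 1/r + ε/2)` times its order; the minimum-degree Erdős–Stone theorem then
yields a complete `(r+1)`-partite graph with parts of size `|F|`, which contains every
`(r+1)`-colourable `F`. -/

open SimpleGraph

universe u v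

open Finset Filter

namespace SimpleGraph

theorem containsCopy_iff_isContained {α β : Type*} {F : SimpleGraph α} {G : SimpleGraph β} :
    ContainsCopy F G ↔ F ⊑ G :=
  ⟨fun ⟨f, hf, hadj⟩ => ⟨⟨⟨f, fun h => hadj h⟩, hf⟩⟩,
    fun ⟨c⟩ => ⟨c, c.injective, fun _ _ h => c.toHom.map_adj h⟩⟩

theorem exEdges_eq_extremalNumber {α : Type*} (n : ℕ) (F : SimpleGraph α) :
    exEdges n F = extremalNumber n F := by
  classical
  set S := {k : ℕ | ∃ G : SimpleGraph (Fin n), ¬ ContainsCopy F G ∧ G.edgeSet.ncard = k}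
  have hS : extremalNumber n F ∈ upperBounds S := by
    rintro _ ⟨G, hG, rfl⟩
    rw [← coe_edgeFinset, Set.ncard_coe_finset]
    simpa using card_edgeFinset_le_extremalNumber (containsCopy_iff_isContained.not.mp hG)
  refine (csSup_le' hS).antisymm (not_lt.mp fun hlt => ?_)
  rw [← Fintype.card_fin n, lt_extremalNumber_iff] at hlt
  obtain ⟨G, _, hG, hlt⟩ := hlt
  refine hlt.not_ge (le_csSup ⟨_, hS⟩ ⟨G, containsCopy_iff_isContained.not.mpr hG, ?_⟩)
  rw [← coe_edgeFinset, Set.ncard_coe_finset]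

theorem card_filter_mod_eq_le (n r c : ℕ) :
    #{w : Fin n | (w : ℕ) % r = c} ≤ (n - 1) / r + 1 := by
  rw [← card_range ((n - 1) / r + 1)]
  refine card_le_card_of_injOn (fun w => (w : ℕ) / r) (fun w _ => ?_) fun w hw w' hw' h => ?_
  · simpa [Nat.lt_succ_iff] using Nat.div_le_div_right (by omega : (w : ℕ) ≤ n - 1)
  · simp only [coe_filter, mem_univ, true_and, Set.mem_ofPred_eq] at hw hw'
    rw [Fin.ext_iff, ← Nat.div_add_mod w r, ← Nat.div_add_mod w' r, hw, hw']
    simp_all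

theorem colorable_turanGraph (n : ℕ) {r : ℕ} (hr : 0 < r) : (turanGraph n r).Colorable r :=
  ⟨Coloring.mk (fun v => ⟨v % r, Nat.mod_lt _ hr⟩) fun h => by
    simpa [Fin.ext_iff, turanGraph_adj] using h⟩

theorem free_turanGraph_of_lt_chromaticNumber {α : Type*} {F : SimpleGraph α} (n : ℕ) {r : ℕ}
    (hr : 0 < r) (hF : r < F.chromaticNumber) : F.Free (turanGraph n r) := fun ⟨c⟩ =>
  hF.not_ge ((colorable_turanGraph n hr).of_hom c.toHom).chromaticNumber_le

theorem le_degree_turanGraph (n r : ℕ) (v : Fin n) :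
    ((n : ℝ) - 1) * (1 - 1 / r) ≤ (turanGraph n r).degree v := by
  have hsplit := card_filter_add_card_filter_not (s := univ) (fun w : Fin n => (w : ℕ) % r = v % r)
  have hdeg : (turanGraph n r).degree v = #{w : Fin n | ¬ (w : ℕ) % r = v % r} := by
    rw [← card_neighborFinset_eq_degree, neighborFinset_eq_filter]
    simp only [turanGraph_adj, ne_comm]
  rw [card_univ, Fintype.card_fin, ← hdeg] at hsplit
  have hlow : (n : ℝ) ≤ (turanGraph n r).degree v + ((n - 1) / r : ℕ) + 1 := by
    exact_mod_cast (show n ≤ _ by linarith [card_filter_mod_eq_le n r (v % r)])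
  have hdiv : (((n - 1) / r : ℕ) : ℝ) ≤ ((n : ℝ) - 1) / r := by
    simpa [Nat.cast_sub v.pos] using (Nat.cast_div_le : (((n - 1) / r : ℕ) : ℝ) ≤ _)
  linarith [show ((n : ℝ) - 1) * (1 - 1 / r) = (n - 1) - (n - 1) / r by ring]

theorem le_card_edgeFinset_turanGraph (n r : ℕ) :
    (1 - 1 / r : ℝ) * n.choose 2 ≤ #(turanGraph n r).edgeFinset := by
  have hsum : ∑ v : Fin n, ((turanGraph n r).degree v : ℝ) =
      2 * #(turanGraph n r).edgeFinset := by
    exact_mod_cast sum_degrees_eq_twice_card_edges (turanGraph n r)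
  have hle := sum_le_sum fun v (_ : v ∈ univ) => le_degree_turanGraph n r v
  rw [hsum, sum_const, card_univ, Fintype.card_fin, nsmul_eq_mul] at hle
  rw [Nat.cast_choose_two]
  linarith

theorem le_extremalNumber_of_lt_chromaticNumber {α : Type*} {F : SimpleGraph α} (n : ℕ) {r : ℕ}
    (hr : 0 < r) (hF : r < F.chromaticNumber) :
    (1 - 1 / r : ℝ) * n.choose 2 ≤ extremalNumber n F := by
  classical
  have := card_edgeFinset_le_extremalNumber (free_turanGraph_of_lt_chromaticNumber n hr hF)
  rw [Fintype.card_fin] at this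
  exact (le_card_edgeFinset_turanGraph n r).trans (by exact_mod_cast this)

section ErdosStone

variable {V : Type*} (G : SimpleGraph V) [DecidableRel G.Adj]

theorem exists_isContained_le_minDegree_s15 (s : Finset V) (hs : s.Nonempty) {d : ℝ}
    (hd : ∀ v ∈ s, d ≤ #{w ∈ s | G.Adj v w}) :
    ∃ H : SimpleGraph (Fin #s), ∃ _ : DecidableRel H.Adj, H ⊑ G ∧ d ≤ H.minDegree := by
  classical
  let f : Fin #s ↪ V := s.equivFin.symm.toEmbedding.trans (.subtype _)
  have hf : ∀ w, w ∈ s ↔ ∃ y, f y = w := fun w =>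
    ⟨fun hw => ⟨s.equivFin ⟨w, hw⟩, by simp [f]⟩, by rintro ⟨y, rfl⟩; simp [f]⟩
  refine ⟨G.comap f, inferInstance, ⟨(Embedding.comap f G).toCopy⟩, ?_⟩
  obtain ⟨v, hv⟩ := hs
  have : Nonempty (Fin #s) := ⟨s.equivFin ⟨v, hv⟩⟩
  obtain ⟨x, hx⟩ := (G.comap f).exists_minimal_degree_vertex
  have hmap : ((G.comap f).neighborFinset x).map f = {w ∈ s | G.Adj (f x) w} := by
    ext w
    simp only [Finset.mem_map, mem_neighborFinset, comap_adj, mem_filter, hf]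
    constructor
    · rintro ⟨y, hy, rfl⟩; exact ⟨⟨y, rfl⟩, hy⟩
    · rintro ⟨⟨y, rfl⟩, hy⟩; exact ⟨y, hy, rfl⟩
  rw [hx, ← card_neighborFinset_eq_degree, ← card_map f, hmap]
  exact hd _ ((hf _).mpr ⟨x, rfl⟩)

variable [DecidableEq V]

theorem sum_card_filter_adj_insert {v : V} {s : Finset V} (hv : v ∉ s) :
    ∑ u ∈ insert v s, #{w ∈ insert v s | G.Adj u w} =
      ∑ u ∈ s, #{w ∈ s | G.Adj u w} + 2 * #{w ∈ s | G.Adj v w} := by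
  simp only [card_filter, sum_insert hv, G.irrefl, if_false, zero_add, sum_add_distrib,
    G.adj_comm _ v]
  ring

theorem exists_subset_forall_le_card_filter_adj (c : ℝ) (s : Finset V) :
    ∃ t ⊆ s, (∀ v ∈ t, c * #t ≤ #{w ∈ t | G.Adj v w}) ∧
      (∑ u ∈ s, #{w ∈ s | G.Adj u w} : ℝ) - c * (#s * (#s + 1)) ≤
        ∑ u ∈ t, (#{w ∈ t | G.Adj u w} : ℝ) - c * (#t * (#t + 1)) := by
  induction s using strongInduction with
  | H s ih =>
    by_cases hs : ∀ v ∈ s, c * #s ≤ #{w ∈ s | G.Adj v w}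
    · exact ⟨s, subset_rfl, hs, le_rfl⟩
    push Not at hs
    obtain ⟨v, hv, hlow⟩ := hs
    obtain ⟨t, hts, ht, hpot⟩ := ih _ (erase_ssubset hv)
    refine ⟨t, hts.trans (erase_subset v s), ht, le_trans ?_ hpot⟩
    -- deleting a vertex of degree below `c * #s` does not decrease the potential
    have hdeg : #{w ∈ s.erase v | G.Adj v w} = #{w ∈ s | G.Adj v w} := by
      rw [filter_erase, erase_eq_of_notMem (by simp)]
    have hsum : (∑ u ∈ s, #{w ∈ s | G.Adj u w} : ℝ) =
        ∑ u ∈ s.erase v, (#{w ∈ s.erase v | G.Adj u w} : ℝ) + 2 * #{w ∈ s | G.Adj v w} := by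
      have := G.sum_card_filter_adj_insert (notMem_erase v s)
      rw [insert_erase hv, hdeg] at this
      exact_mod_cast this
    have hcard : (#s : ℝ) = #(s.erase v) + 1 := by
      rw [cast_card_erase_of_mem hv]; ring
    rw [hsum, hcard]
    rw [hcard] at hlow
    nlinarith

theorem exists_finset_forall_le_card_filter_adj_of_card_edgeFinset [Fintype V] {c : ℝ}
    (hc : 0 ≤ c) :
    ∃ s : Finset V, (∀ v ∈ s, c * #s ≤ #{w ∈ s | G.Adj v w}) ∧
      2 * #G.edgeFinset - c * (Fintype.card V * (Fintype.card V + 1)) ≤ (#s * #s : ℝ) := by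
  obtain ⟨s, -, hs, hpot⟩ := G.exists_subset_forall_le_card_filter_adj c univ
  refine ⟨s, hs, ?_⟩
  have hdeg : ∑ v, (#{w ∈ univ | G.Adj v w} : ℝ) = 2 * #G.edgeFinset := by
    simp_rw [← neighborFinset_eq_filter, card_neighborFinset_eq_degree]
    exact_mod_cast G.sum_degrees_eq_twice_card_edges
  have hsum : ∑ v ∈ s, (#{w ∈ s | G.Adj v w} : ℝ) ≤ #s * #s := by
    simpa using sum_le_card_nsmul s _ (#s : ℝ) fun v _ => by
      exact_mod_cast card_le_card (filter_subset _ s)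
  have hcs : 0 ≤ c * (#s * (#s + 1) : ℝ) := by positivity
  rw [hdeg, card_univ] at hpot
  linarith

end ErdosStone

theorem eventually_completeEquipartiteGraph_isContained_of_card_edgeFinset {ε : ℝ} (hε : 0 < ε)
    (r t : ℕ) :
    ∀ᶠ n in atTop, ∀ {G : SimpleGraph (Fin n)} [DecidableRel G.Adj],
      (1 - 1 / r + ε) * n.choose 2 ≤ #G.edgeFinset → completeEquipartiteGraph (r + 1) t ⊑ G := by
  obtain ⟨N, hN⟩ := eventually_atTop.mp
    (eventually_completeEquipartiteGraph_isContained_of_minDegree (half_pos hε) r t)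
  filter_upwards [eventually_ge_atTop (N + 1),
    tendsto_natCast_atTop_atTop.eventually_ge_atTop (2 * (N + 3) / ε + 3)] with n hnN hnε G _ hG
  -- `m² ≥ n (ε n / 2 - 2 - 3 ε / 2)` below, which exceeds `(N + 1)²` past the second threshold
  obtain ⟨s, hs, hsq⟩ := G.exists_finset_forall_le_card_filter_adj_of_card_edgeFinset
    (c := 1 - 1 / r + ε / 2) (by linarith [Nat.one_sub_one_div_cast_nonneg (α := ℝ) r])
  set m := #s
  rw [Fintype.card_fin] at hsq
  rw [Nat.cast_choose_two] at hG
  have hεn : (N + 1 : ℝ) ≤ ε / 2 * n - 2 - 3 * ε / 2 := by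
    have := (div_le_iff₀ hε).mp (le_sub_iff_add_le.mpr hnε)
    linarith
  have hm : (N + 1 : ℝ) * (N + 1) ≤ m * m := by
    have hn : (N + 1 : ℝ) ≤ n := by exact_mod_cast hnN
    have hrn : 0 ≤ 1 / (r : ℝ) * n := by positivity
    have := mul_le_mul hn hεn (by positivity) (by positivity)
    linarith
  have hmN : N + 1 ≤ m := by
    exact_mod_cast mul_self_le_mul_self_iff (by positivity) (by positivity) |>.mpr hm
  obtain ⟨H, _, hHG, hH⟩ := G.exists_isContained_le_minDegree_s15 s (card_pos.mp (by omega)) hs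
  exact (hN m (by omega) (ge_iff_le.mpr hH)).trans hHG

theorem eventually_extremalNumber_le_of_colorable {α : Type*} [Fintype α] {F : SimpleGraph α}
    {r : ℕ} (hF : F.Colorable (r + 1)) {ε : ℝ} (hε : 0 < ε) :
    ∀ᶠ n in atTop, (extremalNumber n F : ℝ) ≤ (1 - 1 / r + ε) * n.choose 2 := by
  classical
  have hK : F ⊑ completeEquipartiteGraph (r + 1) (Fintype.card α) :=
    isContained_completeEquipartiteGraph_of_colorable hF.some _ fun _ => Fintype.card_subtype_le _
  filter_upwards [eventually_completeEquipartiteGraph_isContained_of_card_edgeFinset hε r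
    (Fintype.card α)] with n hn
  have hnonneg : (0 : ℝ) ≤ (1 - 1 / r + ε) * n.choose 2 := by
    have := Nat.one_sub_one_div_cast_nonneg (α := ℝ) r
    positivity
  have hle := extremalNumber_le_iff_of_nonneg (V := Fin n) F hnonneg
  rw [Fintype.card_fin] at hle
  exact hle.mpr fun G _ hfree => not_lt.mp fun hlt => hfree (hK.trans (hn hlt.le))

end SimpleGraph

/-- **Erdős–Simonovits theorem** (Theorem 1.5):
`ex(n, F) = ((χ(F)-2)/(χ(F)-1) + o(1)) C(n,2)` for every graph `F` with an edge. -/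
theorem erdos_simonovits {α : Type u} [Fintype α] (F : SimpleGraph α)
    (hF : F.edgeSet.Nonempty) (χ : ℕ) (hχ : F.chromaticNumber = χ)
    (ε : ℝ) (hε : 0 < ε) :
    ∃ n₀ : ℕ, ∀ n : ℕ, n₀ ≤ n →
      |(exEdges n F : ℝ) - ((χ : ℝ) - 2) / ((χ : ℝ) - 1) * (n.choose 2 : ℝ)|
        ≤ ε * (n.choose 2 : ℝ) := by
  have hχ2 : 2 ≤ χ := by
    have := two_le_chromaticNumber_iff_ne_bot.mpr (edgeSet_nonempty.mp hF)
    rw [hχ] at this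
    exact_mod_cast this
  obtain ⟨r, rfl⟩ : ∃ r, χ = r + 1 := ⟨χ - 1, by omega⟩
  have hr : 0 < r := by omega
  have hdensity : (((r + 1 : ℕ) : ℝ) - 2) / (((r + 1 : ℕ) : ℝ) - 1) = 1 - 1 / r := by
    rw [Nat.cast_succ, add_sub_cancel_right, one_sub_div (by positivity)]
    ring
  have hlow n := le_extremalNumber_of_lt_chromaticNumber n hr (by rw [hχ]; norm_cast; omega)
  obtain ⟨n₀, hup⟩ := eventually_atTop.mp <|
    eventually_extremalNumber_le_of_colorable (chromaticNumber_le_iff_colorable.mp hχ.le) hε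
  refine ⟨n₀, fun n hn => ?_⟩
  rw [exEdges_eq_extremalNumber, hdensity, abs_sub_le_iff]
  have hεC : 0 ≤ ε * n.choose 2 := by positivity
  constructor <;> linarith [hup n hn, hlow n]
end

section
/- For every integer r ≥ 2 and every real ε > 0, there exist n₀ and δ > 0 such that the following holds: if n ≥ n₀ and G is a K_{r+1}-free graph on n vertices with e(G) ≥ (1 − δ)·t_r(n), then one can delete at most ε·n² edges from G so that the resulting graph is r-partite (i.e., r-colorable). -/
open SimpleGraph

universe u v

/-! Füredi's argument. A `K_{r+1}`-free graph `G` has an `r`-colouring `f` with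
`e(G) + e_mono(f) ≤ e(K_f)`, where `e_mono(f)` counts the monochromatic edges of `G` and `K_f` is
the complete multipartite graph on the colour classes: pick a vertex `u` of maximum degree, give its
non-neighbours a new colour and recurse into its neighbourhood, which is `K_r`-free. Since `K_f` is
`K_{r+1}`-free, Turán's theorem gives `e(K_f) ≤ t_r(n)`. Deleting the monochromatic edges therefore
removes at most `t_r(n) - e(G) ≤ δ t_r(n) ≤ δ n²` edges, so `δ = ε` works for every `n`. -/

namespace Finset

theorem card_filter_filter_add_card_filter_filter_not {α : Type*} (S : Finset α) (q p : α → Prop)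
    [DecidablePred q] [DecidablePred p] :
    #{y ∈ {y ∈ S | q y} | p y} + #{y ∈ {y ∈ S | ¬q y} | p y} = #{y ∈ S | p y} := by
  rw [filter_comm q, filter_comm (fun y => ¬q y), card_filter_add_card_filter_not]

end Finset

open Finset

def bichromaticPairs {V : Type*} (S : Finset V) (f : V → ℕ) : ℕ :=
  ∑ x ∈ S, #{y ∈ S | f x ≠ f y}

theorem bichromaticPairs_extend {V : Type*} {r : ℕ} {S : Finset V} {q : V → Prop}
    [DecidablePred q] {g : V → ℕ} (hg : ∀ v ∈ {y ∈ S | q y}, g v < r) :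
    bichromaticPairs S (fun v => if q v then g v else r) =
      bichromaticPairs {y ∈ S | q y} g + 2 * (#{y ∈ S | q y} * #{y ∈ S | ¬q y}) := by
  set A := {y ∈ S | q y}
  set B := {y ∈ S | ¬q y}
  set f := fun v => if q v then g v else r
  have hfA : ∀ y ∈ A, f y = g y := fun y hy => if_pos (mem_filter.1 hy).2
  have hfB : ∀ y ∈ B, f y = r := fun y hy => if_neg (mem_filter.1 hy).2
  have hAB : ∀ x ∈ A, ∀ y ∈ B, f x ≠ f y := fun x hx y hy => by
    rw [hfA x hx, hfB y hy]; exact (hg x hx).ne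
  have hsplit (x : V) : #{y ∈ S | f x ≠ f y} = #{y ∈ A | f x ≠ f y} + #{y ∈ B | f x ≠ f y} :=
    (card_filter_filter_add_card_filter_filter_not S q _).symm
  have hA : ∀ x ∈ A, #{y ∈ S | f x ≠ f y} = #{y ∈ A | g x ≠ g y} + #B := fun x hx => by
    rw [hsplit, filter_true_of_mem (hAB x hx),
      filter_congr fun y hy => by rw [hfA x hx, hfA y hy]]
  have hB : ∀ x ∈ B, #{y ∈ S | f x ≠ f y} = #A := fun x hx => by
    rw [hsplit, filter_true_of_mem fun y hy => (hAB y hy x hx).symm,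
      filter_false_of_mem fun y hy h => h (by rw [hfB x hx, hfB y hy]), card_empty, add_zero]
  rw [bichromaticPairs, ← sum_filter_add_sum_filter_not S q, sum_congr rfl hA, sum_congr rfl hB,
    sum_add_distrib, bichromaticPairs]
  simp only [sum_const, smul_eq_mul]
  ring

namespace SimpleGraph

section FurediColoring

variable {V : Type*} (G : SimpleGraph V) [DecidableRel G.Adj]

/-- Twice the number of edges of `G[S]` plus twice the number of its edges monochromatic under
`f`. -/
def furediWeight (S : Finset V) (f : V → ℕ) : ℕ :=
  ∑ x ∈ S, (#{y ∈ S | G.Adj x y} + #{y ∈ S | G.Adj x y ∧ f x = f y})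

def IsFurediColoringOn (r : ℕ) (S : Finset V) (f : V → ℕ) : Prop :=
  (∀ v ∈ S, f v < r) ∧ G.furediWeight S f ≤ bichromaticPairs S f

variable {G}

theorem sum_card_filter_adj_comm (s t : Finset V) :
    ∑ x ∈ s, #{y ∈ t | G.Adj x y} = ∑ y ∈ t, #{x ∈ s | G.Adj y x} :=
  (sum_card_bipartiteAbove_eq_sum_card_bipartiteBelow G.Adj).trans <|
    sum_congr rfl fun y _ => congrArg card (filter_congr fun x _ => G.adj_comm x y)

theorem furediWeight_extend {r : ℕ} {S : Finset V} {q : V → Prop} [DecidablePred q]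
    {g : V → ℕ} (hg : ∀ v ∈ {y ∈ S | q y}, g v < r) :
    G.furediWeight S (fun v => if q v then g v else r) =
      G.furediWeight {y ∈ S | q y} g + 2 * ∑ x ∈ {y ∈ S | ¬q y}, #{y ∈ S | G.Adj x y} := by
  set A := {y ∈ S | q y}
  set B := {y ∈ S | ¬q y}
  set f := fun v => if q v then g v else r
  have hfA : ∀ y ∈ A, f y = g y := fun y hy => if_pos (mem_filter.1 hy).2
  have hfB : ∀ y ∈ B, f y = r := fun y hy => if_neg (mem_filter.1 hy).2
  have hAB : ∀ x ∈ A, ∀ y ∈ B, f x ≠ f y := fun x hx y hy => by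
    rw [hfA x hx, hfB y hy]; exact (hg x hx).ne
  have hsplit (p : V → Prop) [DecidablePred p] :
      #{y ∈ S | p y} = #{y ∈ A | p y} + #{y ∈ B | p y} :=
    (card_filter_filter_add_card_filter_filter_not S q p).symm
  have hA : ∀ x ∈ A, #{y ∈ S | G.Adj x y} + #{y ∈ S | G.Adj x y ∧ f x = f y} =
      #{y ∈ A | G.Adj x y} + #{y ∈ A | G.Adj x y ∧ g x = g y} + #{y ∈ B | G.Adj x y} := by
    intro x hx
    have hmonoA : {y ∈ A | G.Adj x y ∧ f x = f y} = {y ∈ A | G.Adj x y ∧ g x = g y} :=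
      filter_congr fun y hy => by rw [hfA x hx, hfA y hy]
    have hmonoB : {y ∈ B | G.Adj x y ∧ f x = f y} = ∅ :=
      filter_false_of_mem fun y hy h => hAB x hx y hy h.2
    rw [hsplit (G.Adj x), hsplit (fun y => G.Adj x y ∧ f x = f y), hmonoA, hmonoB, card_empty]
    ring
  have hB : ∀ x ∈ B, #{y ∈ S | G.Adj x y} + #{y ∈ S | G.Adj x y ∧ f x = f y} =
      #{y ∈ S | G.Adj x y} + #{y ∈ B | G.Adj x y} := by
    intro x hx
    have hmonoA : {y ∈ A | G.Adj x y ∧ f x = f y} = ∅ :=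
      filter_false_of_mem fun y hy h => hAB y hy x hx h.2.symm
    have hmonoB : {y ∈ B | G.Adj x y ∧ f x = f y} = {y ∈ B | G.Adj x y} :=
      filter_congr fun y hy => by rw [hfB x hx, hfB y hy, eq_self, and_true]
    rw [hsplit (fun y => G.Adj x y ∧ f x = f y), hmonoA, hmonoB, card_empty, zero_add]
  -- the edges between `A` and `B` are counted from their endpoint in `B`
  have hcross : ∑ x ∈ A, #{y ∈ B | G.Adj x y} + ∑ x ∈ B, #{y ∈ B | G.Adj x y} =
      ∑ x ∈ B, #{y ∈ S | G.Adj x y} := by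
    rw [sum_card_filter_adj_comm, ← sum_add_distrib]
    exact sum_congr rfl fun x _ => (hsplit _).symm
  rw [furediWeight, ← sum_filter_add_sum_filter_not S q, sum_congr rfl hA, sum_congr rfl hB,
    furediWeight]
  simp only [sum_add_distrib] at hcross ⊢
  omega

theorem IsFurediColoringOn.extend {r : ℕ} {S : Finset V} {u : V} {g : V → ℕ}
    (hmax : ∀ x ∈ S, #{y ∈ S | G.Adj x y} ≤ #{y ∈ S | G.Adj u y})
    (hg : G.IsFurediColoringOn r {y ∈ S | G.Adj u y} g) :
    G.IsFurediColoringOn (r + 1) S (fun v => if G.Adj u v then g v else r) := by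
  obtain ⟨hgr, hg⟩ := hg
  refine ⟨fun v hv => ?_, ?_⟩
  · by_cases h : G.Adj u v
    · simpa [h] using (hgr v (mem_filter.2 ⟨hv, h⟩)).trans r.lt_succ_self
    · simp [h]
  have hdeg : ∑ x ∈ {y ∈ S | ¬G.Adj u y}, #{y ∈ S | G.Adj x y} ≤
      #{y ∈ S | ¬G.Adj u y} * #{y ∈ S | G.Adj u y} := by
    simpa using sum_le_sum fun x hx => hmax x (mem_filter.1 hx).1
  rw [furediWeight_extend hgr, bichromaticPairs_extend hgr]
  nlinarith [hg, hdeg]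

theorem CliqueFreeOn.exists_isFurediColoringOn {r : ℕ} {S : Finset V}
    (hS : G.CliqueFreeOn S (r + 1)) : ∃ f, G.IsFurediColoringOn r S f := by
  induction r generalizing S with
  | zero =>
    obtain rfl : S = ∅ := eq_empty_of_forall_notMem fun a ha =>
      (G.cliqueFreeOn_singleton.1 (CliqueFreeOn.subset G (Set.singleton_subset_iff.2 ha) hS)).false
    exact ⟨0, by simp [IsFurediColoringOn, furediWeight, bichromaticPairs]⟩
  | succ r ih =>
    obtain rfl | hne := S.eq_empty_or_nonempty
    · exact ⟨0, by simp [IsFurediColoringOn, furediWeight, bichromaticPairs]⟩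
    obtain ⟨u, hu, hmax⟩ := exists_max_image S (fun x => #{y ∈ S | G.Adj x y}) hne
    obtain ⟨g, hg⟩ := ih (S := {y ∈ S | G.Adj u y})
      (by convert CliqueFreeOn.of_succ G hS hu using 1; ext; simp)
    exact ⟨_, hg.extend hmax⟩

theorem sum_card_filter_adj_eq_two_mul_ncard_edgeSet [Fintype V] :
    ∑ x, #{y | G.Adj x y} = 2 * G.edgeSet.ncard := by
  rw [← coe_edgeFinset, Set.ncard_coe_finset, ← sum_degrees_eq_twice_card_edges]
  simp only [← card_neighborFinset_eq_degree, neighborFinset_eq_filter]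

end FurediColoring

theorem CliqueFree.exists_furedi_coloring {V : Type*} [Fintype V] {G : SimpleGraph V} {r : ℕ}
    (hG : G.CliqueFree (r + 1)) :
    ∃ f : V → ℕ, (∀ v, f v < r) ∧
      G.edgeSet.ncard + (G \ (⊤ : SimpleGraph ℕ).comap f).edgeSet.ncard ≤
        ((⊤ : SimpleGraph ℕ).comap f).edgeSet.ncard := by
  classical
  obtain ⟨f, hf, hweight⟩ := (hG.cliqueFreeOn (s := (univ : Finset V))).exists_isFurediColoringOn
  refine ⟨f, fun v => hf v (mem_univ v), ?_⟩
  rw [furediWeight, bichromaticPairs, sum_add_distrib] at hweight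
  have hG := sum_card_filter_adj_eq_two_mul_ncard_edgeSet (G := G)
  have hmono := sum_card_filter_adj_eq_two_mul_ncard_edgeSet (G := G \ (⊤ : SimpleGraph ℕ).comap f)
  have hK := sum_card_filter_adj_eq_two_mul_ncard_edgeSet (G := (⊤ : SimpleGraph ℕ).comap f)
  simp only [sdiff_adj, comap_adj, top_adj, not_not] at hmono hK
  omega

theorem CliqueFree.ncard_edgeSet_le_turanEdges {V : Type*} [Fintype V] {G : SimpleGraph V}
    {r : ℕ} (hG : G.CliqueFree (r + 1)) : G.edgeSet.ncard ≤ turanEdges r (Fintype.card V) := by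
  classical
  rw [turanEdges, ← coe_edgeFinset, ← coe_edgeFinset, Set.ncard_coe_finset, Set.ncard_coe_finset,
    card_edgeFinset_turanGraph]
  exact hG.card_edgeFinset_le

end SimpleGraph

theorem cliqueFree_of_not_containsCopy {V : Type*} {G : SimpleGraph V} {n : ℕ}
    (h : ¬ContainsCopy (completeGraph (Fin n)) G) : G.CliqueFree n := by
  by_contra hc
  obtain ⟨c⟩ := (not_cliqueFree_iff_top_isContained n).1 hc
  exact h ⟨c, c.injective, fun _ _ hab => c.toHom.map_adj hab⟩

theorem turanEdges_le_sq (r n : ℕ) : turanEdges r n ≤ n ^ 2 := by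
  rw [turanEdges, ← coe_edgeFinset, Set.ncard_coe_finset]
  have h := (turanGraph n r).card_edgeFinset_le_card_choose_two
  rw [Fintype.card_fin] at h
  exact h.trans (Nat.choose_le_pow n 2)

theorem erdos_simonovits_stability_general (r : ℕ) (ε : ℝ) (hε : 0 < ε) :
    ∃ (n₀ : ℕ) (δ : ℝ), 0 < δ ∧ ∀ n : ℕ, n₀ ≤ n → ∀ (V : Type u) [Fintype V],
      ∀ G : SimpleGraph V, Fintype.card V = n →
      ¬ ContainsCopy (completeGraph (Fin (r + 1))) G →
      (1 - δ) * (turanEdges r n : ℝ) ≤ (G.edgeSet.ncard : ℝ) →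
      ∃ G' ≤ G, ((G.edgeSet \ G'.edgeSet).ncard : ℝ) ≤ ε * (n : ℝ) ^ 2 ∧
        G'.Colorable r := by
  classical
  refine ⟨0, ε, hε, fun n _ V _ G hcard hfree hedges => ?_⟩
  obtain ⟨f, hf, hfuredi⟩ := (cliqueFree_of_not_containsCopy hfree).exists_furedi_coloring
  set K := (⊤ : SimpleGraph ℕ).comap f
  have hK : K.Colorable r :=
    ⟨Coloring.mk (fun v => ⟨f v, hf v⟩) fun h e => h (congrArg Fin.val e)⟩
  have hturan : K.edgeSet.ncard ≤ turanEdges r n :=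
    hcard ▸ (hK.cliqueFree r.lt_succ_self).ncard_edgeSet_le_turanEdges
  refine ⟨G ⊓ K, inf_le_left, ?_, hK.mono_left inf_le_right⟩
  rw [← edgeSet_sdiff, sdiff_inf_self_left]
  have hdeleted : (G.edgeSet.ncard : ℝ) + (G \ K).edgeSet.ncard ≤ turanEdges r n := by
    exact_mod_cast hfuredi.trans hturan
  have hsq : (turanEdges r n : ℝ) ≤ n ^ 2 := by exact_mod_cast turanEdges_le_sq r n
  nlinarith

/-- **Erdős–Simonovits stability** (Theorem 1.6): for `r ≥ 2` and `ε > 0` there exist `n₀`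
and `δ > 0` such that every `K_{r+1}`-free graph on `n ≥ n₀` vertices with at least
`(1 - δ) t_r(n)` edges can be made `r`-partite by deleting at most `ε n²` edges. -/
theorem erdos_simonovits_stability (r : ℕ) (hr : 2 ≤ r) (ε : ℝ) (hε : 0 < ε) :
    ∃ (n₀ : ℕ) (δ : ℝ), 0 < δ ∧ ∀ n : ℕ, n₀ ≤ n → ∀ (V : Type u) [Fintype V],
      ∀ G : SimpleGraph V, Fintype.card V = n →
      ¬ ContainsCopy (completeGraph (Fin (r + 1))) G →
      (1 - δ) * (turanEdges r n : ℝ) ≤ (G.edgeSet.ncard : ℝ) →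
      ∃ G' ≤ G, ((G.edgeSet \ G'.edgeSet).ncard : ℝ) ≤ ε * (n : ℝ) ^ 2 ∧
        G'.Colorable r :=
  erdos_simonovits_stability_general r ε hε
end

section
/- Let r ≥ 2 be an integer, let η > 0 be real, and let F be a graph with chromatic number χ(F) = r + 1. There exists n₀ such that every F-free graph G on n ≥ n₀ vertices can be made K_{r+1}-free by removing at most η·n² edges. -/
open SimpleGraph

universe u v

/-!
Apply Szemerédi's regularity lemma with a uniformity parameter `ε` much smaller than a density
threshold `δ`, and delete the edges inside parts, across non-uniform pairs and across pairs of
density below `δ`: this removes at most `(2ε + 3δ)n²` edges. A `K_{r+1}` in what is left meets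
`r + 1` parts that are pairwise `ε`-uniform of density at least `δ`. Picking vertices of one part
one at a time while keeping large common neighbourhoods in the other parts, and recursing into
those neighbourhoods (which stay uniform and dense), yields a complete `(r+1)`-partite subgraph
with `|F|` vertices in each class, hence a copy of the `(r+1)`-colourable graph `F`.
-/

open Finset

lemma Finpartition.IsEquipartition.le_card_part_of_mul_le {α : Type*} [DecidableEq α]
    {s U : Finset α} {P : Finpartition s} (hP : P.IsEquipartition) {N : ℕ}
    (h : N * #P.parts ≤ #s) (hU : U ∈ P.parts) : N ≤ #U :=
  ((Nat.le_div_iff_mul_le (card_pos.2 ⟨U, hU⟩)).2 h).trans (hP.average_le_card_part hU)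

namespace SimpleGraph

variable {V : Type*} {G : SimpleGraph V}

lemma exists_completeMultipartite_cons {m t : ℕ} {f : Fin (m + 1) → Finset V} {S : Finset V}
    {T : Fin m → Finset V} (hSf : S ⊆ f 0) (hS : #S = t) (hTf : ∀ i, T i ⊆ f i.succ)
    (hT : ∀ i, #(T i) = t) (hST : ∀ x ∈ S, ∀ i, ∀ y ∈ T i, G.Adj x y)
    (hTT : ∀ i j, i ≠ j → ∀ x ∈ T i, ∀ y ∈ T j, G.Adj x y) :
    ∃ T' : Fin (m + 1) → Finset V, (∀ i, T' i ⊆ f i) ∧ (∀ i, #(T' i) = t) ∧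
      ∀ i j, i ≠ j → ∀ x ∈ T' i, ∀ y ∈ T' j, G.Adj x y := by
  refine ⟨Fin.cons S T, Fin.cases (by simpa using hSf) (by simpa using hTf),
    Fin.cases (by simpa using hS) (by simpa using hT), fun i j hij x hx y hy => ?_⟩
  cases i using Fin.cases <;> cases j using Fin.cases
  · exact absurd rfl hij
  · exact hST x (by simpa using hx) _ y (by simpa using hy)
  · exact (hST y (by simpa using hy) _ x (by simpa using hx)).symm
  · exact hTT _ _ (fun h => hij (congrArg Fin.succ h)) x (by simpa using hx) y (by simpa using hy)

lemma containsCopy_of_colorable {α : Type*} [Fintype α] {F : SimpleGraph α} {m : ℕ}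
    (hF : F.Colorable m) {T : Fin m → Finset V} (hT : ∀ i, Fintype.card α ≤ #(T i))
    (hadj : ∀ i j, i ≠ j → ∀ x ∈ T i, ∀ y ∈ T j, G.Adj x y) : ContainsCopy F G := by
  obtain ⟨c⟩ := hF
  have hemb i : ∃ e : α ↪ V, ∀ a, e a ∈ T i := by
    obtain ⟨e⟩ := Function.Embedding.nonempty_of_card_le (α := α) (β := T i) (by simpa using hT i)
    exact ⟨e.trans (Function.Embedding.subtype _), fun a => (e a).2⟩
  choose e he using hemb
  have hφ {a b} (h : c a ≠ c b) : G.Adj (e (c a) a) (e (c b) b) := hadj _ _ h _ (he _ a) _ (he _ b)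
  refine ⟨fun a => e (c a) a, fun a b hab => ?_, fun a b h => hφ (c.valid h)⟩
  by_cases hc : c a = c b
  · simp only [hc] at hab
    exact (e _).injective hab
  · exact absurd hab (hφ hc).ne

lemma ncard_edgeSet_sdiff [Fintype V] [DecidableEq V] {H : SimpleGraph V} [DecidableRel G.Adj]
    [DecidableRel H.Adj] (h : H ≤ G) :
    ((G.edgeSet \ H.edgeSet).ncard : ℝ) = #G.edgeFinset - #H.edgeFinset := by
  rw [← coe_edgeFinset, ← coe_edgeFinset, ← coe_sdiff, Set.ncard_coe_finset,
    cast_card_sdiff (edgeFinset_mono h)]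

variable [DecidableRel G.Adj] {ε ε' δ γ : ℝ} {s t s' t' : Finset V}

lemma IsUniform.sub_lt_edgeDensity (h : G.IsUniform ε s t) (hs : s' ⊆ s) (ht : t' ⊆ t)
    (hs' : #s * ε ≤ #s') (ht' : #t * ε ≤ #t') :
    (G.edgeDensity s t : ℝ) - ε < G.edgeDensity s' t' := by
  linarith [(abs_sub_lt_iff.1 (h hs ht hs' ht')).2]

lemma IsUniform.of_subset (h : G.IsUniform ε s t) (hs : s' ⊆ s) (ht : t' ⊆ t)
    (hs' : γ * #s ≤ #s') (ht' : γ * #t ≤ #t') (hεγ : ε ≤ γ) (hγ : γ ≤ 1)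
    (hε' : 2 * ε ≤ γ * ε') : G.IsUniform ε' s' t' := by
  have hε := h.pos
  have hε'0 : 0 < ε' := pos_of_mul_pos_right (by linarith) (hε.le.trans hεγ)
  have hlarge : ∀ {u u' : Finset V}, γ * #u ≤ #u' → #u * ε ≤ #u' := fun h =>
    (mul_le_mul_of_nonneg_left hεγ (Nat.cast_nonneg _)).trans (by linarith)
  intro A hA B hB hAc hBc
  have hlarge' : ∀ {u u' w : Finset V}, γ * #u ≤ #u' → #u' * ε' ≤ #w → #u * ε ≤ #w :=
    fun {u _ _} h hw => by nlinarith [Nat.cast_nonneg (α := ℝ) #u]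
  have h₁ := h (hA.trans hs) (hB.trans ht) (hlarge' hs' hAc) (hlarge' ht' hBc)
  have h₂ := h hs ht (hlarge hs') (hlarge ht')
  calc |(G.edgeDensity A B : ℝ) - G.edgeDensity s' t'|
      ≤ |(G.edgeDensity A B : ℝ) - G.edgeDensity s t| +
          |(G.edgeDensity s' t' : ℝ) - G.edgeDensity s t| := by
        rw [abs_sub_comm (G.edgeDensity s' t' : ℝ)]; exact abs_sub_le _ _ _
    _ < ε + ε := add_lt_add h₁ h₂
    _ ≤ ε' := by nlinarith

lemma card_interedges_le_sum [DecidableEq V] (s t : Finset V) :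
    #(G.interedges s t) ≤ ∑ v ∈ s, #{y ∈ t | G.Adj v y} := by
  rw [interedges, Rel.interedges_eq_biUnion]
  exact card_biUnion_le.trans_eq (by simp)

lemma IsUniform.card_filter_card_adj_lt [DecidableEq V] (h : G.IsUniform ε s t)
    (hδ : δ ≤ G.edgeDensity s t) (hεδ : ε ≤ δ / 2) (ht' : t' ⊆ t) (ht'card : #t * ε ≤ #t') :
    (#{v ∈ s | (#{y ∈ t' | G.Adj v y} : ℝ) < δ / 2 * #t'} : ℝ) < #s * ε := by
  set X := {v ∈ s | (#{y ∈ t' | G.Adj v y} : ℝ) < δ / 2 * #t'}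
  have hε := h.pos
  have hdens : 0 < (G.edgeDensity s t : ℝ) := by linarith
  have hs : s.Nonempty := nonempty_iff_ne_empty.2 fun hs => by simp [hs] at hdens
  have ht : t.Nonempty := nonempty_iff_ne_empty.2 fun ht => by simp [ht] at hdens
  have ht'pos : (0 : ℝ) < #t' := (mul_pos (by simpa using ht.card_pos) hε).trans_le ht'card
  by_contra! hX
  have hXpos : (0 : ℝ) < #X := (mul_pos (by simpa using hs.card_pos) hε).trans_le hX
  have hlow := h.sub_lt_edgeDensity (filter_subset _ _) ht' hX ht'card
  have hhigh : (G.edgeDensity X t' : ℝ) < δ / 2 := by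
    rw [edgeDensity_def, Rat.cast_div, div_lt_iff₀ (by push_cast; positivity)]
    push_cast
    calc (#(G.interedges X t') : ℝ) ≤ ∑ v ∈ X, (#{y ∈ t' | G.Adj v y} : ℝ) := by
          exact_mod_cast card_interedges_le_sum X t'
      _ < ∑ _v ∈ X, δ / 2 * #t' :=
          sum_lt_sum_of_nonempty (card_pos.1 (by exact_mod_cast hXpos))
            fun v hv => (mem_filter.1 hv).2
      _ = δ / 2 * (#X * #t') := by rw [sum_const, nsmul_eq_mul]; ring
  linarith

lemma exists_common_neighbors [DecidableEq V] {m k : ℕ} {L : Finset V} {f : Fin m → Finset V}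
    (hδ : 0 < δ) (hδ1 : δ ≤ 1) (hεk : ε ≤ (δ / 2) ^ k) (hεδ : ε ≤ δ / 2) (hεm : m * ε ≤ 1 / 2)
    (hL : 2 * k < #L) (hunif : ∀ i, G.IsUniform ε L (f i))
    (hdens : ∀ i, δ ≤ G.edgeDensity L (f i)) :
    ∃ (S : Finset V) (C : Fin m → Finset V), S ⊆ L ∧ #S = k ∧ (∀ i, C i ⊆ f i) ∧
      (∀ i, (δ / 2) ^ k * #(f i) ≤ #(C i)) ∧ ∀ v ∈ S, ∀ i, ∀ y ∈ C i, G.Adj v y := by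
  induction k with
  | zero => exact ⟨∅, f, empty_subset _, card_empty, fun _ => Subset.rfl, by simp, by simp⟩
  | succ k ih =>
    have hδ2 : 0 < δ / 2 := by positivity
    have hεk' : ε ≤ (δ / 2) ^ k :=
      hεk.trans (pow_le_pow_of_le_one hδ2.le (by linarith) k.le_succ)
    obtain ⟨S, C, hSL, hS, hCf, hC, hSC⟩ := ih hεk' (by omega)
    let bad i := {v ∈ L | (#{y ∈ C i | G.Adj v y} : ℝ) < δ / 2 * #(C i)}
    have hbad i : (#(bad i) : ℝ) ≤ #L * ε := by
      refine ((hunif i).card_filter_card_adj_lt (hdens i) hεδ (hCf i) ?_).le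
      nlinarith [hC i, Nat.cast_nonneg (α := ℝ) #(f i)]
    have hcount : (#(S ∪ univ.biUnion bad) : ℝ) ≤ k + m * (#L * ε) := calc
      _ ≤ #S + ∑ i, (#(bad i) : ℝ) := by
        exact_mod_cast (card_union_le _ _).trans (Nat.add_le_add_left card_biUnion_le _)
      _ ≤ k + m * (#L * ε) := by simpa [hS] using sum_le_sum fun i (_ : i ∈ univ) => hbad i
    have hkL : (2 * (k + 1) : ℝ) < #L := by exact_mod_cast hL
    obtain ⟨v, hvL, hv⟩ := exists_mem_notMem_of_card_lt_card (s := S ∪ univ.biUnion bad) (t := L)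
      (by exact_mod_cast (by nlinarith [Nat.cast_nonneg (α := ℝ) #L] :
        (#(S ∪ univ.biUnion bad) : ℝ) < #L))
    simp only [mem_union, mem_biUnion, mem_univ, true_and, not_or, not_exists] at hv
    have hvgood i : δ / 2 * #(C i) ≤ (#{y ∈ C i | G.Adj v y} : ℝ) := by
      simpa [bad, hvL] using hv.2 i
    refine ⟨insert v S, fun i => {y ∈ C i | G.Adj v y}, insert_subset hvL hSL,
      by rw [card_insert_of_notMem hv.1, hS], fun i => (filter_subset _ _).trans (hCf i),
      fun i => ?_, ?_⟩
    · calc (δ / 2) ^ (k + 1) * #(f i) = δ / 2 * ((δ / 2) ^ k * #(f i)) := by ring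
        _ ≤ _ := (mul_le_mul_of_nonneg_left (hC i) hδ2.le).trans (hvgood i)
    · rintro u hu i y hy
      obtain rfl | hu := mem_insert.1 hu
      · exact (mem_filter.1 hy).2
      · exact hSC u hu i y (mem_filter.1 hy).1

theorem exists_completeMultipartite_of_isUniform (m t : ℕ) (hδ : 0 < δ) (hδ1 : δ ≤ 1) :
    ∃ ε : ℝ, 0 < ε ∧ ∃ N : ℕ, ∀ {W : Type*} [DecidableEq W] (G : SimpleGraph W) [DecidableRel G.Adj]
      (f : Fin m → Finset W), (∀ i, N ≤ #(f i)) →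
      (∀ i j, i ≠ j → G.IsUniform ε (f i) (f j)) →
      (∀ i j, i ≠ j → δ ≤ G.edgeDensity (f i) (f j)) →
      ∃ T : Fin m → Finset W, (∀ i, T i ⊆ f i) ∧ (∀ i, #(T i) = t) ∧
        ∀ i j, i ≠ j → ∀ x ∈ T i, ∀ y ∈ T j, G.Adj x y := by
  induction m generalizing δ with
  | zero =>
    exact ⟨1, one_pos, 0, fun _ _ _ _ _ _ =>
      ⟨finZeroElim, finZeroElim, finZeroElim, finZeroElim⟩⟩
  | succ m ih =>
    have hδ2 : 0 < δ / 2 := by positivity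
    obtain ⟨ε', hε', N', hN'⟩ := ih hδ2 (by linarith)
    set γ := (δ / 2) ^ t
    have hγ : 0 < γ := by positivity
    have hγ1 : γ ≤ 1 := pow_le_one₀ hδ2.le (by linarith)
    -- The common neighbourhoods keep a fraction `γ` of each part, so `ε ≪ γ ε'` makes them
    -- `ε'`-uniform.
    obtain ⟨ε, hε, hεε', hεγ, hεδ, hεm⟩ : ∃ ε : ℝ, 0 < ε ∧ 2 * ε ≤ γ * ε' ∧ ε ≤ γ ∧
        ε ≤ δ / 2 ∧ m * ε ≤ 1 / 2 := by
      refine ⟨min (min (γ * ε' / 2) γ) (min (δ / 2) (1 / (2 * m + 2))), by positivity,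
        (le_div_iff₀' two_pos).1 ((min_le_left _ _).trans (min_le_left _ _)),
        (min_le_left _ _).trans (min_le_right _ _), (min_le_right _ _).trans (min_le_left _ _), ?_⟩
      have : (m : ℝ) * (1 / (2 * m + 2)) ≤ 1 / 2 := by
        rw [mul_one_div, div_le_div_iff₀] <;> linarith
      exact (mul_le_mul_of_nonneg_left ((min_le_right _ _).trans (min_le_right _ _))
        m.cast_nonneg).trans this
    refine ⟨ε, hε, max (2 * t + 1) ⌈N' / γ⌉₊, fun G _ f hf hunif hdens => ?_⟩
    have hsucc (i : Fin m) : (0 : Fin (m + 1)) ≠ i.succ := (Fin.succ_ne_zero i).symm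
    obtain ⟨S, C, hSL, hS, hCf, hC, hSC⟩ := exists_common_neighbors (L := f 0)
      (f := fun i => f i.succ) hδ hδ1 hεγ hεδ hεm (by have := hf 0; omega)
      (fun i => hunif _ _ (hsucc i)) (fun i => hdens _ _ (hsucc i))
    have hCN i : N' ≤ #(C i) := by
      have : (N' : ℝ) / γ ≤ #(f i.succ) :=
        (Nat.le_ceil _).trans (by exact_mod_cast (le_max_right _ _).trans (hf _))
      rw [div_le_iff₀ hγ] at this
      have hCi : (#(f i.succ) : ℝ) * γ ≤ #(C i) := by linarith [hC i]
      exact_mod_cast this.trans hCi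
    have hCε i : #(f i.succ) * ε ≤ #(C i) := by
      nlinarith [hC i, Nat.cast_nonneg (α := ℝ) #(f i.succ)]
    have hCunif i j (hij : i ≠ j) : G.IsUniform ε' (C i) (C j) :=
      (hunif _ _ ((Fin.succ_injective _).ne hij)).of_subset (hCf i) (hCf j) (hC i) (hC j)
        hεγ hγ1 hεε'
    have hCdens i j (hij : i ≠ j) : δ / 2 ≤ G.edgeDensity (C i) (C j) := by
      have := (hunif _ _ ((Fin.succ_injective _).ne hij)).sub_lt_edgeDensity (hCf i) (hCf j)
        (hCε i) (hCε j)
      linarith [hdens _ _ ((Fin.succ_injective _).ne hij)]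
    obtain ⟨T, hTC, hT, hTadj⟩ := hN' G C hCN hCunif hCdens
    exact exists_completeMultipartite_cons hSL hS (fun i => (hTC i).trans (hCf i)) hT
      (fun x hx i y hy => hSC x hx i y (hTC i hy)) hTadj

theorem exists_containsCopy_of_containsCopy_regularityReduced {α : Type*} [Fintype α]
    {F : SimpleGraph α} {m : ℕ} (hF : F.Colorable m) (hδ : 0 < δ) (hδ1 : δ ≤ 1) :
    ∃ ε : ℝ, 0 < ε ∧ ∃ N : ℕ, ∀ {W : Type*} [DecidableEq W] [Fintype W] (G : SimpleGraph W)
      [DecidableRel G.Adj] (P : Finpartition (univ : Finset W)), (∀ U ∈ P.parts, N ≤ #U) →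
      ContainsCopy (completeGraph (Fin m)) (G.regularityReduced P ε δ) → ContainsCopy F G := by
  obtain ⟨ε, hε, N, hN⟩ := exists_completeMultipartite_of_isUniform m (Fintype.card α) hδ hδ1
  refine ⟨ε, hε, N, fun G _ P hPN ⟨g, _, hg⟩ => ?_⟩
  choose Q hQ hgQ using fun i => P.exists_mem (mem_univ (g i))
  have hQQ i j (hij : i ≠ j) : G.IsUniform ε (Q i) (Q j) ∧ δ ≤ G.edgeDensity (Q i) (Q j) := by
    obtain ⟨-, U, hU, U', hU', hgU, hgU', -, hunif, hdens⟩ := hg hij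
    obtain rfl := P.eq_of_mem_parts hU (hQ i) hgU (hgQ i)
    obtain rfl := P.eq_of_mem_parts hU' (hQ j) hgU' (hgQ j)
    exact ⟨hunif, hdens⟩
  obtain ⟨T, -, hT, hadj⟩ := hN G Q (fun i => hPN _ (hQ i)) (fun i j h => (hQQ i j h).1)
    (fun i j h => (hQQ i j h).2)
  exact containsCopy_of_colorable hF (fun i => (hT i).ge) hadj

lemma filter_unreduced_edges_subset [DecidableEq V] {A : Finset V} (P : Finpartition A)
    (ε δ : ℝ) :
    (A ×ˢ A).filter (fun (x, y) ↦ G.Adj x y ∧ ¬ (G.regularityReduced P ε δ).Adj x y) ⊆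
      (P.nonUniforms G ε).biUnion (fun (U, W) ↦ U ×ˢ W) ∪ P.parts.biUnion offDiag ∪
        (P.sparsePairs G δ).biUnion fun (U, W) ↦ G.interedges U W := by
  rintro ⟨x, y⟩ hxy
  simp only [mem_filter, mem_product, regularityReduced_adj, not_and, not_exists] at hxy
  obtain ⟨⟨hx, hy⟩, hadj, hnot⟩ := hxy
  obtain ⟨U, hU, hxU⟩ := P.exists_mem hx
  obtain ⟨W, hW, hyW⟩ := P.exists_mem hy
  simp only [mem_union, mem_biUnion, Prod.exists, P.mk_mem_nonUniforms,
    Finpartition.mk_mem_sparsePairs, mem_product, mem_offDiag, mem_interedges_iff]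
  obtain rfl | hUW := eq_or_ne U W
  · exact Or.inl (Or.inr ⟨U, hU, hxU, hyW, hadj.ne⟩)
  by_cases hunif : G.IsUniform ε U W
  · exact Or.inr ⟨U, W, ⟨hU, hW, hUW, not_le.1 (hnot hadj U hU W hW hxU hyW hUW hunif)⟩,
      hxU, hyW, hadj⟩
  · exact Or.inl (Or.inl ⟨U, W, ⟨hU, hW, hUW, hunif⟩, hxU, hyW⟩)

lemma card_edgeFinset_sub_card_edgeFinset_regularityReduced_le [Fintype V] [DecidableEq V]
    [Nonempty V] {P : Finpartition (univ : Finset V)} (hP : P.IsEquipartition) (hε : 0 < ε)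
    (hPε : P.IsUniform G ε) (hδ : 0 < δ) (hP' : 4 / δ ≤ #P.parts) :
    (#G.edgeFinset - #(G.regularityReduced P ε δ).edgeFinset : ℝ) ≤
      (2 * ε + 3 * δ) * Fintype.card V ^ 2 := by
  let A := (P.nonUniforms G ε).biUnion fun (U, W) ↦ U ×ˢ W
  let B := P.parts.biUnion offDiag
  let C := (P.sparsePairs G δ).biUnion fun (U, W) ↦ G.interedges U W
  have : 2 * (#G.edgeFinset - #(G.regularityReduced P ε δ).edgeFinset : ℝ) ≤
      (4 * ε + 9 / 2 * δ) * Fintype.card V ^ 2 := calc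
    _ = (#((univ ×ˢ univ).filter fun (x, y) ↦
          G.Adj x y ∧ ¬(G.regularityReduced P ε δ).Adj x y) : ℝ) := by
      rw [univ_product_univ, mul_sub, filter_and_not, cast_card_sdiff]
      · norm_cast
        rw [two_mul_card_edgeFinset, two_mul_card_edgeFinset]
      · gcongr with xy _
        exact fun hxy ↦ regularityReduced_le hxy
    _ ≤ #(A ∪ B ∪ C) := by gcongr; exact filter_unreduced_edges_subset P ε δ
    _ ≤ #A + #B + #C := mod_cast (card_union_le _ _).trans (by gcongr; exact card_union_le _ _)
    _ ≤ 4 * ε * Fintype.card V ^ 2 + δ / 2 * Fintype.card V ^ 2 +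
          4 * δ * Fintype.card V ^ 2 := by
      gcongr
      · exact (hP.sum_nonUniforms_lt univ_nonempty hε hPε).le
      · exact hP.card_biUnion_offDiag_le hδ hP'
      · exact hP.card_interedges_sparsePairs_le hδ.le
    _ = _ := by ring
  nlinarith [sq_nonneg (Fintype.card V : ℝ)]

end SimpleGraph

open SimpleGraph

theorem erdos_frankl_rodl_general (r : ℕ) (η : ℝ) (hη : 0 < η)
    {α : Type u} [Fintype α] (F : SimpleGraph α)
    (hχ : F.chromaticNumber = (r + 1 : ℕ)) :
    ∃ n₀ : ℕ, ∀ (V : Type v) [Fintype V], ∀ G : SimpleGraph V, n₀ ≤ Fintype.card V →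
      ¬ ContainsCopy F G →
      ∃ G' ≤ G, ((G.edgeSet \ G'.edgeSet).ncard : ℝ) ≤ η * (Fintype.card V : ℝ) ^ 2 ∧
        ¬ ContainsCopy (completeGraph (Fin (r + 1))) G' := by
  classical
  have hF : F.Colorable (r + 1) := chromaticNumber_le_iff_colorable.1 hχ.le
  obtain ⟨δ, hδ, hδ1, hδη⟩ : ∃ δ : ℝ, 0 < δ ∧ δ ≤ 1 ∧ 6 * δ ≤ η :=
    ⟨min η 1 / 6, by positivity, by linarith [min_le_right η 1], by linarith [min_le_left η 1]⟩
  obtain ⟨ε₀, hε₀, N, hcopy⟩ := exists_containsCopy_of_containsCopy_regularityReduced hF hδ hδ1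
  obtain ⟨ε, hε, hεε₀, hεη⟩ : ∃ ε : ℝ, 0 < ε ∧ ε ≤ ε₀ ∧ 4 * ε ≤ η :=
    ⟨min (η / 4) ε₀, by positivity, min_le_right _ _, by linarith [min_le_left (η / 4) ε₀]⟩
  set l := ⌈4 / δ⌉₊
  refine ⟨max l (N * SzemerediRegularity.bound ε l + 1), fun V _ G hn hFG => ?_⟩
  have : Nonempty V := Fintype.card_pos_iff.1 (by omega)
  obtain ⟨P, hP, hlP, hPb, hPε⟩ := szemeredi_regularity G hε (le_of_max_le_left hn)
  have hPN U (hU : U ∈ P.parts) : N ≤ #U := hP.le_card_part_of_mul_le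
    ((Nat.mul_le_mul_left N hPb).trans (by rw [card_univ]; omega)) hU
  refine ⟨G.regularityReduced P ε δ, regularityReduced_le, ?_, fun ⟨g, hg, hadj⟩ => hFG
    (hcopy G P hPN ⟨g, hg, fun _ _ h => regularityReduced_mono hεε₀ (hadj h)⟩)⟩
  rw [ncard_edgeSet_sdiff regularityReduced_le]
  calc _ ≤ (2 * ε + 3 * δ) * (Fintype.card V : ℝ) ^ 2 :=
        card_edgeFinset_sub_card_edgeFinset_regularityReduced_le hP hε hPε hδ
          ((Nat.le_ceil _).trans (by exact_mod_cast hlP))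
    _ ≤ η * (Fintype.card V : ℝ) ^ 2 := by
        gcongr
        linarith

/-- **Erdős–Frankl–Rödl removal consequence** (Theorem 2.6): for `r ≥ 2`, `η > 0`, and `F`
with `χ(F) = r + 1`, there is `n₀` such that every `F`-free graph on `n ≥ n₀` vertices can be
made `K_{r+1}`-free by removing at most `η n²` edges. -/
theorem erdos_frankl_rodl (r : ℕ) (hr : 2 ≤ r) (η : ℝ) (hη : 0 < η)
    {α : Type u} [Fintype α] (F : SimpleGraph α)
    (hχ : F.chromaticNumber = (r + 1 : ℕ)) :
    ∃ n₀ : ℕ, ∀ (V : Type v) [Fintype V], ∀ G : SimpleGraph V, n₀ ≤ Fintype.card V →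
      ¬ ContainsCopy F G →
      ∃ G' ≤ G, ((G.edgeSet \ G'.edgeSet).ncard : ℝ) ≤ η * (Fintype.card V : ℝ) ^ 2 ∧
        ¬ ContainsCopy (completeGraph (Fin (r + 1))) G' :=
  erdos_frankl_rodl_general r η hη F hχ
end
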